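/- arXiv:2210.15049 — 9 statements merged into one kernel-verified Lean document; each statement's English description precedes it below -/
import Mathlib

section
/- Let Λ₁ and Λ₂ be well-rounded full-rank lattices in ℝ². Then Λ₁ is similar to Λ₂ if and only if there exist a minimal basis {x₁, y₁} of Λ₁ and a minimal basis {x₂, y₂} of Λ₂ such that |cos∠(x₁, y₁)| = |cos∠(x₂, y₂)|, where cos∠(x, y) = ⟨x, y⟩/(‖x‖·‖y‖). -/
open scoped RealInnerProductSpace

noncomputable section

/-- `ℝ²` with the Euclidean inner product and norm. -/
abbrev E2 : Type := EuclideanSpace ℝ (Fin 2)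

/-- The vector `(a, b) ∈ ℝ²`. -/
def v2 (a b : ℝ) : E2 := WithLp.toLp 2 ![a, b]

/-- The lattice `ℤx + ℤy`. -/
def latticeOf (x y : E2) : Set E2 := {z | ∃ m n : ℤ, z = m • x + n • y}

/-- `{x, y}` is a basis of the lattice `Λ`. -/
def IsBasisOf (x y : E2) (Λ : Set E2) : Prop :=
  LinearIndependent ℝ ![x, y] ∧ Λ = latticeOf x y

/-- `Λ` is a full-rank lattice of `ℝ²`. -/
def IsLattice (Λ : Set E2) : Prop := ∃ x y : E2, IsBasisOf x y Λ

/-- `Λ₁ ∼ Λ₂`: there are `α > 0` and an orthogonal transformation `U` with `Λ₂ = αUΛ₁`. -/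
def LatticeSimilar (Λ₁ Λ₂ : Set E2) : Prop :=
  ∃ α : ℝ, 0 < α ∧ ∃ U : (E2 ≃ₗᵢ[ℝ] E2), Λ₂ = (fun w => α • U w) '' Λ₁

/-- Cosine of the angle between `x` and `y`. -/
def cosAngle (x y : E2) : ℝ := ⟪x, y⟫ / (‖x‖ * ‖y‖)

/-- The twist map `T_α = diag(α, 1/α)`. -/
def Tmap (α : ℝ) : E2 → E2 := fun w => v2 (α * w 0) (w 1 / α)


/-- The length of a shortest nonzero vector of `Λ`. -/
def lambda1 (Λ : Set E2) : ℝ := sInf {r | ∃ z ∈ Λ, z ≠ 0 ∧ ‖z‖ = r}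

/-- The set `S(Λ)` of minimal vectors of `Λ`. -/
def minVecs (Λ : Set E2) : Set E2 := {z | z ∈ Λ ∧ ‖z‖ = lambda1 Λ}

/-- `Λ` is well-rounded: its minimal vectors span `ℝ²`. -/
def IsWellRounded (Λ : Set E2) : Prop := Submodule.span ℝ (minVecs Λ) = ⊤


/-- `{x, y}` is a minimal basis of the well-rounded lattice `Λ`. -/
def IsMinimalBasis (x y : E2) (Λ : Set E2) : Prop :=
  IsBasisOf x y Λ ∧ x ∈ minVecs Λ ∧ y ∈ minVecs Λ


/-!
If `x, y` are independent minimal vectors of a lattice, then `x ± y` are nonzero lattice vectors,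
which forces `|⟪x, y⟫| ≤ λ₁² / 2`; hence every `s • x + t • y` with `|s|, |t| ≤ 1/2` has squared
norm at most `3λ₁² / 4`, and rounding coordinates shows that `x, y` form a basis. So a well-rounded
lattice has a minimal basis, and a similarity carries it to a minimal basis with the same angle.
Conversely, a minimal basis has Gram matrix `λ₁² [[1, c], [c, 1]]` with `c = cos∠(x, y)`, so two
minimal bases with equal cosines have proportional Gram matrices and differ by a similarity, which
then maps one lattice onto the other; replacing `y` by `-y` flips the sign of `c`.
-/

open scoped Pointwise

section InnerProductSpace

variable {E : Type*} [NormedAddCommGroup E] [InnerProductSpace ℝ E]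

lemma norm_smul_add_smul_sq (s t : ℝ) (x y : E) :
    ‖s • x + t • y‖ ^ 2 = s ^ 2 * ‖x‖ ^ 2 + 2 * s * t * ⟪x, y⟫ + t ^ 2 * ‖y‖ ^ 2 := by
  rw [norm_add_sq_real, norm_smul, norm_smul, real_inner_smul_left, real_inner_smul_right,
    mul_pow, mul_pow, Real.norm_eq_abs, Real.norm_eq_abs, sq_abs, sq_abs]
  ring

lemma norm_smul_add_smul_sq_le {x y : E} {r s t : ℝ} (hx : ‖x‖ = r) (hy : ‖y‖ = r)
    (hxy : |⟪x, y⟫| ≤ r ^ 2 / 2) (hs : |s| ≤ 1 / 2) (ht : |t| ≤ 1 / 2) :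
    ‖s • x + t • y‖ ^ 2 ≤ 3 / 4 * r ^ 2 := by
  have hs2 : s ^ 2 ≤ 1 / 4 := by nlinarith [sq_abs s, abs_nonneg s]
  have ht2 : t ^ 2 ≤ 1 / 4 := by nlinarith [sq_abs t, abs_nonneg t]
  have hst : s * t * ⟪x, y⟫ ≤ r ^ 2 / 8 :=
    calc s * t * ⟪x, y⟫ ≤ |s| * |t| * |⟪x, y⟫| := by
          rw [← abs_mul, ← abs_mul]; exact le_abs_self _
      _ ≤ 1 / 2 * (1 / 2) * (r ^ 2 / 2) := by gcongr
      _ = r ^ 2 / 8 := by ring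
  rw [norm_smul_add_smul_sq, hx, hy]
  nlinarith [sq_nonneg r]

lemma Module.Basis.exists_linearIsometryEquiv_apply_eq [FiniteDimensional ℝ E] {ι : Type*}
    (b : Module.Basis ι ℝ E) (v : ι → E) (h : ∀ i j, ⟪v i, v j⟫ = ⟪b i, b j⟫) :
    ∃ U : E ≃ₗᵢ[ℝ] E, ∀ i, U (b i) = v i := by
  set f := b.constr ℝ v
  have hf : ∀ i, f (b i) = v i := b.constr_basis ℝ v
  have hinner : (innerₗ E).compl₁₂ f f = innerₗ E :=
    LinearMap.ext_basis b b fun i j => by simpa [hf] using h i j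
  let U := (f.isometryOfInner fun x y => by
    simpa using LinearMap.congr_fun₂ hinner x y).toLinearIsometryEquiv rfl
  exact ⟨U, hf⟩

end InnerProductSpace

lemma span_pair_eq_top {x y : E2} (h : LinearIndependent ℝ ![x, y]) :
    Submodule.span ℝ {x, y} = ⊤ := by
  have := h.span_eq_top_of_card_eq_finrank' (by simp)
  rwa [Matrix.range_cons_cons_empty] at this

lemma inner_eq_cosAngle_mul {x y : E2} (hx : x ≠ 0) (hy : y ≠ 0) :
    ⟪x, y⟫ = cosAngle x y * (‖x‖ * ‖y‖) :=
  (div_mul_cancel₀ _ (by positivity)).symm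

lemma cosAngle_neg_right (x y : E2) : cosAngle x (-y) = -cosAngle x y := by
  rw [cosAngle, cosAngle, inner_neg_right, norm_neg, neg_div]

lemma cosAngle_smul_map {α : ℝ} (hα : 0 < α) (U : E2 ≃ₗᵢ[ℝ] E2) (x y : E2) :
    cosAngle (α • U x) (α • U y) = cosAngle x y := by
  rw [cosAngle, cosAngle, real_inner_smul_left, real_inner_smul_right,
    LinearIsometryEquiv.inner_map_map, norm_smul, norm_smul, U.norm_map, U.norm_map,
    Real.norm_of_nonneg hα.le, mul_mul_mul_comm, ← mul_assoc,
    mul_div_mul_left _ _ (by positivity)]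

lemma exists_smul_linearIsometryEquiv_of_cosAngle_eq {x₁ y₁ x₂ y₂ : E2}
    (hind : LinearIndependent ℝ ![x₁, y₁]) (h₁ : ‖x₁‖ = ‖y₁‖) (h₂ : ‖x₂‖ = ‖y₂‖)
    (hx₂ : x₂ ≠ 0) (h : cosAngle x₁ y₁ = cosAngle x₂ y₂) :
    ∃ α : ℝ, 0 < α ∧ ∃ U : E2 ≃ₗᵢ[ℝ] E2, α • U x₁ = x₂ ∧ α • U y₁ = y₂ := by
  have hx₁ : x₁ ≠ 0 := by simpa using hind.ne_zero 0
  have hy₁ : y₁ ≠ 0 := by simpa using hind.ne_zero 1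
  have hy₂ : y₂ ≠ 0 := norm_ne_zero_iff.mp (h₂ ▸ norm_ne_zero_iff.mpr hx₂)
  set α := ‖x₂‖ / ‖x₁‖
  have hα : 0 < α := by positivity
  set b := basisOfLinearIndependentOfCardEqFinrank hind (by simp)
  have hb : ⇑b = ![x₁, y₁] := coe_basisOfLinearIndependentOfCardEqFinrank hind _
  obtain ⟨U, hU⟩ := b.exists_linearIsometryEquiv_apply_eq ![α⁻¹ • x₂, α⁻¹ • y₂] <| by
    have hxy₁ := inner_eq_cosAngle_mul hx₁ hy₁
    have hxy₂ := inner_eq_cosAngle_mul hx₂ hy₂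
    have hα' : α * ‖x₁‖ = ‖x₂‖ := div_mul_cancel₀ _ (by positivity)
    intro i j
    rw [hb]
    fin_cases i <;> fin_cases j <;>
      simp only [Fin.zero_eta, Fin.mk_one, Matrix.cons_val_zero, Matrix.cons_val_one,
        real_inner_smul_left, real_inner_smul_right, real_inner_self_eq_norm_sq, norm_smul,
        norm_inv, Real.norm_of_nonneg hα.le,
        real_inner_comm x₂ y₂, real_inner_comm x₁ y₁, hxy₁, hxy₂, ← h₁, ← h₂, h, ← hα'] <;>
      field_simp
  have hb₀ : b 0 = x₁ := by rw [hb]; rfl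
  have hb₁ : b 1 = y₁ := by rw [hb]; rfl
  refine ⟨α, hα, U, ?_, ?_⟩
  · rw [← hb₀, hU, Matrix.cons_val_zero, smul_inv_smul₀ hα.ne']
  · rw [← hb₁, hU, Matrix.cons_val_one, Matrix.cons_val_zero, smul_inv_smul₀ hα.ne']

lemma latticeOf_eq_span (x y : E2) : latticeOf x y = Submodule.span ℤ {x, y} := by
  ext z
  simp only [latticeOf, Set.mem_ofPred_eq, SetLike.mem_coe, Submodule.mem_span_pair, eq_comm]

lemma IsLattice.exists_submodule_eq {Λ : Set E2} (h : IsLattice Λ) :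
    ∃ L : Submodule ℤ E2, (L : Set E2) = Λ := by
  obtain ⟨x, y, -, rfl⟩ := h
  exact ⟨_, (latticeOf_eq_span x y).symm⟩

lemma lambda1_le_norm {Λ : Set E2} {z : E2} (hz : z ∈ Λ) (h0 : z ≠ 0) : lambda1 Λ ≤ ‖z‖ :=
  csInf_le ⟨0, fun _ ⟨w, _, _, hw⟩ => hw ▸ norm_nonneg w⟩ ⟨z, hz, h0, rfl⟩

lemma abs_inner_le_of_mem_minVecs {L : Submodule ℤ E2} {x y : E2} (hx : x ∈ minVecs L)
    (hy : y ∈ minVecs L) (hind : LinearIndependent ℝ ![x, y]) :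
    |⟪x, y⟫| ≤ lambda1 L ^ 2 / 2 := by
  have hlam : 0 ≤ lambda1 L := hx.2 ▸ norm_nonneg x
  have hadd : lambda1 L ≤ ‖x + y‖ := lambda1_le_norm (L.add_mem hx.1 hy.1) fun h => by
    simpa using (LinearIndependent.pair_iff.mp hind 1 1 (by simpa using h)).1
  have hsub : lambda1 L ≤ ‖x - y‖ := lambda1_le_norm (L.sub_mem hx.1 hy.1) fun h => by
    simpa using (LinearIndependent.pair_iff.mp hind 1 (-1) (by simpa [← sub_eq_add_neg] using h)).1
  have hadd2 := pow_le_pow_left₀ hlam hadd 2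
  have hsub2 := pow_le_pow_left₀ hlam hsub 2
  rw [norm_add_sq_real, hx.2, hy.2] at hadd2
  rw [norm_sub_sq_real, hx.2, hy.2] at hsub2
  rw [abs_le]
  constructor <;> linarith

lemma isBasisOf_of_mem_minVecs {Λ : Set E2} (hΛ : IsLattice Λ) {x y : E2}
    (hx : x ∈ minVecs Λ) (hy : y ∈ minVecs Λ) (hind : LinearIndependent ℝ ![x, y]) :
    IsBasisOf x y Λ := by
  obtain ⟨L, rfl⟩ := hΛ.exists_submodule_eq
  refine ⟨hind, ?_⟩
  rw [latticeOf_eq_span, SetLike.coe_set_eq]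
  refine le_antisymm (fun z hz => ?_) (Submodule.span_le.mpr (Set.pair_subset hx.1 hy.1))
  have hzℝ : z ∈ Submodule.span ℝ {x, y} := span_pair_eq_top hind ▸ Submodule.mem_top
  obtain ⟨a, c, rfl⟩ := Submodule.mem_span_pair.mp hzℝ
  set r := (a - round a) • x + (c - round c) • y
  have hr : r = (a • x + c • y) - (round a • x + round c • y) := by
    simp only [r, ← Int.cast_smul_eq_zsmul ℝ]
    module
  have hrL : r ∈ L := hr ▸ L.sub_mem hz (L.add_mem (L.smul_mem _ hx.1) (L.smul_mem _ hy.1))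
  have hlam : 0 < lambda1 L := hx.2 ▸ norm_pos_iff.mpr (by simpa using hind.ne_zero 0)
  have hr0 : r = 0 := by
    by_contra hr0
    have hle := pow_le_pow_left₀ hlam.le (lambda1_le_norm hrL hr0) 2
    have := norm_smul_add_smul_sq_le hx.2 hy.2 (abs_inner_le_of_mem_minVecs hx hy hind)
      (abs_sub_round a) (abs_sub_round c)
    nlinarith
  rw [hr, sub_eq_zero] at hr0
  rw [hr0]
  exact Submodule.mem_span_pair.mpr ⟨_, _, rfl⟩

lemma exists_isMinimalBasis {Λ : Set E2} (hΛ : IsLattice Λ) (hW : IsWellRounded Λ) :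
    ∃ x y, IsMinimalBasis x y Λ := by
  obtain ⟨x, hx, hx0⟩ : ∃ x ∈ minVecs Λ, x ≠ 0 := by
    by_contra! h
    exact bot_ne_top (hW ▸ (Submodule.span_eq_bot.mpr h).symm)
  obtain ⟨y, hy, hyx⟩ : ∃ y ∈ minVecs Λ, y ∉ Submodule.span ℝ {x} := by
    by_contra! h
    have htop : Submodule.span ℝ {x} = ⊤ := top_le_iff.mp (hW ▸ Submodule.span_le.mpr h)
    have := finrank_span_singleton (K := ℝ) hx0
    rw [htop, finrank_top, finrank_euclideanSpace_fin] at this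
    exact absurd this (by norm_num)
  have hind : LinearIndependent ℝ ![x, y] :=
    (LinearIndependent.pair_iff' hx0).mpr fun a hax =>
      hyx (hax ▸ Submodule.smul_mem _ a (Submodule.mem_span_singleton_self x))
  exact ⟨x, y, isBasisOf_of_mem_minVecs hΛ hx hy hind, hx, hy⟩

section Similarity

variable {α : ℝ} (U : E2 ≃ₗᵢ[ℝ] E2)

lemma image_smul_map_latticeOf (x y : E2) :
    (fun w => α • U w) '' latticeOf x y = latticeOf (α • U x) (α • U y) := by
  have hmap : ∀ m n : ℤ, α • U (m • x + n • y) = m • (α • U x) + n • (α • U y) := fun m n => by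
    rw [map_add, map_zsmul, map_zsmul, smul_add, smul_comm α m, smul_comm α n]
  ext z
  constructor
  · rintro ⟨w, ⟨m, n, rfl⟩, rfl⟩
    exact ⟨m, n, hmap m n⟩
  · rintro ⟨m, n, rfl⟩
    exact ⟨m • x + n • y, ⟨m, n, rfl⟩, hmap m n⟩

variable (hα : 0 < α)
include hα

lemma norm_smul_map (w : E2) : ‖α • U w‖ = α * ‖w‖ := by
  rw [norm_smul, U.norm_map, Real.norm_of_nonneg hα.le]

lemma lambda1_image_smul_map (Λ : Set E2) :
    lambda1 ((fun w => α • U w) '' Λ) = α * lambda1 Λ := by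
  have hset : {r | ∃ z ∈ (fun w => α • U w) '' Λ, z ≠ 0 ∧ ‖z‖ = r} =
      α • {r | ∃ z ∈ Λ, z ≠ 0 ∧ ‖z‖ = r} := by
    ext r
    simp only [Set.mem_smul_set, Set.mem_image, Set.mem_ofPred_eq, smul_eq_mul]
    constructor
    · rintro ⟨_, ⟨w, hw, rfl⟩, hw0, rfl⟩
      exact ⟨‖w‖, ⟨w, hw, fun h => hw0 (by simp [h]), rfl⟩, (norm_smul_map U hα w).symm⟩
    · rintro ⟨_, ⟨w, hw, hw0, rfl⟩, rfl⟩
      exact ⟨α • U w, ⟨w, hw, rfl⟩, by simp [hα.ne', hw0], norm_smul_map U hα w⟩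
  rw [lambda1, hset, Real.sInf_smul_of_nonneg hα.le, smul_eq_mul, lambda1]

lemma IsMinimalBasis.image_smul_map {x y : E2} {Λ : Set E2} (h : IsMinimalBasis x y Λ) :
    IsMinimalBasis (α • U x) (α • U y) ((fun w => α • U w) '' Λ) := by
  obtain ⟨⟨hind, rfl⟩, hx, hy⟩ := h
  have hmin : ∀ {z}, z ∈ minVecs (latticeOf x y) →
      α • U z ∈ minVecs ((fun w => α • U w) '' latticeOf x y) := fun hz =>
    ⟨⟨_, hz.1, rfl⟩, by rw [norm_smul_map U hα, hz.2, lambda1_image_smul_map U hα]⟩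
  refine ⟨⟨?_, image_smul_map_latticeOf U x y⟩, hmin hx, hmin hy⟩
  refine LinearIndependent.pair_iff.mpr fun s t hst => LinearIndependent.pair_iff.mp hind s t ?_
  rw [smul_comm s, smul_comm t, ← smul_add, ← map_smul, ← map_smul, ← map_add,
    smul_eq_zero_iff_right hα.ne', LinearIsometryEquiv.map_eq_zero_iff] at hst
  exact hst

end Similarity

lemma IsMinimalBasis.neg_right {x y : E2} {Λ : Set E2} (h : IsMinimalBasis x y Λ) :
    IsMinimalBasis x (-y) Λ := by
  obtain ⟨⟨hind, rfl⟩, hx, hy⟩ := h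
  have hlat : latticeOf x (-y) = latticeOf x y := by
    ext z
    constructor <;> rintro ⟨m, n, rfl⟩ <;> exact ⟨m, -n, by simp⟩
  refine ⟨⟨?_, hlat.symm⟩, hx, ?_, by rw [norm_neg, hy.2]⟩
  · refine LinearIndependent.pair_iff.mpr fun s t hst => ?_
    have := LinearIndependent.pair_iff.mp hind s (-t) (by rwa [neg_smul, ← smul_neg])
    exact ⟨this.1, neg_eq_zero.mp this.2⟩
  · rw [latticeOf_eq_span]
    exact Submodule.neg_mem _ (Submodule.subset_span (by simp))

lemma IsMinimalBasis.latticeSimilar {x₁ y₁ x₂ y₂ : E2} {Λ₁ Λ₂ : Set E2}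
    (h₁ : IsMinimalBasis x₁ y₁ Λ₁) (h₂ : IsMinimalBasis x₂ y₂ Λ₂)
    (h : cosAngle x₁ y₁ = cosAngle x₂ y₂) : LatticeSimilar Λ₁ Λ₂ := by
  obtain ⟨⟨hind₁, rfl⟩, hx₁, hy₁⟩ := h₁
  obtain ⟨⟨hind₂, rfl⟩, hx₂, hy₂⟩ := h₂
  obtain ⟨α, hα, U, rfl, rfl⟩ := exists_smul_linearIsometryEquiv_of_cosAngle_eq hind₁
    (hx₁.2.trans hy₁.2.symm) (hx₂.2.trans hy₂.2.symm) (by simpa using hind₂.ne_zero 0) h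
  exact ⟨α, hα, U, (image_smul_map_latticeOf U x₁ y₁).symm⟩

theorem stmt_2_general (Λ₁ Λ₂ : Set E2) (h₁ : IsLattice Λ₁)
    (w₁ : IsWellRounded Λ₁) :
    LatticeSimilar Λ₁ Λ₂ ↔
      ∃ x₁ y₁ x₂ y₂ : E2, IsMinimalBasis x₁ y₁ Λ₁ ∧ IsMinimalBasis x₂ y₂ Λ₂ ∧
        |cosAngle x₁ y₁| = |cosAngle x₂ y₂| := by
  constructor
  · rintro ⟨α, hα, U, rfl⟩
    obtain ⟨x, y, hb⟩ := exists_isMinimalBasis h₁ w₁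
    exact ⟨x, y, _, _, hb, hb.image_smul_map U hα, by rw [cosAngle_smul_map hα]⟩
  · rintro ⟨x₁, y₁, x₂, y₂, hb₁, hb₂, hcos⟩
    rcases abs_eq_abs.mp hcos with hcos | hcos
    · exact hb₁.latticeSimilar hb₂ hcos
    · exact hb₁.latticeSimilar hb₂.neg_right (by rw [cosAngle_neg_right, hcos])

/-- Two well-rounded planar lattices are similar iff they admit minimal bases with the same
absolute cosine of the angle. -/
theorem stmt_2 (Λ₁ Λ₂ : Set E2) (h₁ : IsLattice Λ₁) (h₂ : IsLattice Λ₂)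
    (w₁ : IsWellRounded Λ₁) (w₂ : IsWellRounded Λ₂) :
    LatticeSimilar Λ₁ Λ₂ ↔
      ∃ x₁ y₁ x₂ y₂ : E2, IsMinimalBasis x₁ y₁ Λ₁ ∧ IsMinimalBasis x₂ y₂ Λ₂ ∧
        |cosAngle x₁ y₁| = |cosAngle x₂ y₂| :=
  stmt_2_general Λ₁ Λ₂ h₁ w₁
end
end

section
/- Let x = (a, c) and y = (b, d) be vectors of ℝ² that are linearly independent over ℝ with ad + bc ≠ 0, and let α > 0 be a real number with ‖T_α x‖ = ‖T_α y‖. Then the cosine of the angle between T_α x and T_α y satisfies ⟨T_α x, T_α y⟩/(‖T_α x‖·‖T_α y‖) = (ac + bd)/(ad + bc). -/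
open scoped RealInnerProductSpace

noncomputable section

/-!
With `x = (a, c)`, `y = (b, d)`, the hypothesis `‖T_α x‖ = ‖T_α y‖` reads
`α⁴a² + c² = α⁴b² + d²`, and the cosine becomes `⟪T_α x, T_α y⟫ / ‖T_α x‖² = (α⁴ab + cd)/(α⁴a² + c²)`.
Cross-multiplying with `ad + bc`, the two sides differ by `ac(α⁴(b² - a²) + d² - c²) = 0`.
-/

lemma cosAngle_of_norm_eq {x y : E2} (h : ‖x‖ = ‖y‖) : cosAngle x y = ⟪x, y⟫ / ⟪x, x⟫ := by
  rw [cosAngle, ← h, real_inner_self_eq_norm_mul_norm]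

lemma inner_Tmap_v2 (α p q r s : ℝ) :
    ⟪Tmap α (v2 p q), Tmap α (v2 r s)⟫ = α ^ 2 * (p * r) + q * s / α ^ 2 := by
  simp only [Tmap, v2, Matrix.cons_val_zero, Matrix.cons_val_one, PiLp.inner_apply,
    RCLike.inner_apply, Real.ringHom_apply, Fin.sum_univ_two]
  ring

lemma div_eq_of_twisted_sq_eq {a c b d t : ℝ} (ht : t ≠ 0) (habcd : a * d + b * c ≠ 0)
    (h : t * (a * a) + c * c / t = t * (b * b) + d * d / t) :
    (t * (a * b) + c * d / t) / (t * (a * a) + c * c / t) = (a * c + b * d) / (a * d + b * c) := by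
  have hden : t * (a * a) + c * c / t ≠ 0 := by
    intro h0
    have hsq : (t * a) ^ 2 + c ^ 2 = 0 := by
      field_simp at h0
      linear_combination h0
    have hta : t * a = 0 := by nlinarith [sq_nonneg (t * a), sq_nonneg c]
    have hc : c = 0 := by nlinarith [sq_nonneg (t * a), sq_nonneg c]
    have ha : a = 0 := (mul_eq_zero.mp hta).resolve_left ht
    exact habcd (by simp [ha, hc])
  have key : t ^ 2 * (a * a) + c * c = t ^ 2 * (b * b) + d * d := by
    field_simp at h
    linear_combination h
  rw [div_eq_div_iff hden habcd]
  field_simp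
  linear_combination (-(a * c)) * key

theorem stmt_4_general (a c b d α : ℝ)
    (habcd : a * d + b * c ≠ 0) (hα : 0 < α)
    (heq : ‖Tmap α (v2 a c)‖ = ‖Tmap α (v2 b d)‖) :
    cosAngle (Tmap α (v2 a c)) (Tmap α (v2 b d)) = (a * c + b * d) / (a * d + b * c) := by
  have hsq : ⟪Tmap α (v2 a c), Tmap α (v2 a c)⟫ = ⟪Tmap α (v2 b d), Tmap α (v2 b d)⟫ := by
    rw [real_inner_self_eq_norm_mul_norm, real_inner_self_eq_norm_mul_norm, heq]
  rw [inner_Tmap_v2, inner_Tmap_v2] at hsq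
  rw [cosAngle_of_norm_eq heq, inner_Tmap_v2, inner_Tmap_v2]
  exact div_eq_of_twisted_sq_eq (pow_ne_zero 2 hα.ne') habcd hsq

/-- For a twistable basis, the cosine of the angle of the twisted basis vectors is
`(ac + bd)/(ad + bc)`. -/
theorem stmt_4 (a c b d α : ℝ) (hli : LinearIndependent ℝ ![v2 a c, v2 b d])
    (habcd : a * d + b * c ≠ 0) (hα : 0 < α)
    (heq : ‖Tmap α (v2 a c)‖ = ‖Tmap α (v2 b d)‖) :
    cosAngle (Tmap α (v2 a c)) (Tmap α (v2 b d)) = (a * c + b * d) / (a * d + b * c) :=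
  stmt_4_general a c b d α habcd hα heq
end
end

section
/- Let x = (a, c) and y = (b, d) be vectors of ℝ² that are linearly independent over ℝ with ad + bc ≠ 0. If |(ac + bd)/(ad + bc)| ≤ 1/2, then there exists a real number α > 0 such that ‖T_α x‖ = ‖T_α y‖ (i.e., the basis {x, y} is twistable). -/
open scoped RealInnerProductSpace

noncomputable section

/-- `Λ₁ ∼ Λ₂`: there are `α > 0` and an orthogonal transformation `U` with `Λ₂ = αUΛ₁`. -/
def LatSimilar (Λ₁ Λ₂ : Set E2) : Prop :=
  ∃ α : ℝ, 0 < α ∧ ∃ U : (E2 ≃ₗᵢ[ℝ] E2), Λ₂ = (fun w => α • U w) '' Λ₁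

/-
Since `‖T_α (p, q)‖² = α²p² + q²/α²`, the twist equation reads `α⁴ (a² - b²) = d² - c²`, which
has a positive solution as soon as `(a² - b²)(d² - c²) > 0`. That product equals
`(ad + bc)² - (ac + bd)²`, so it is positive whenever `|ac + bd| < |ad + bc|`.
-/

theorem norm_Tmap_v2_sq (α p q : ℝ) :
    ‖Tmap α (v2 p q)‖ ^ 2 = α ^ 2 * p ^ 2 + q ^ 2 / α ^ 2 := by
  simp [EuclideanSpace.norm_sq_eq, Tmap, v2, Fin.sum_univ_two, mul_pow, div_pow]

theorem exists_norm_Tmap_eq_of_mul_pos {a c b d : ℝ}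
    (h : 0 < (a ^ 2 - b ^ 2) * (d ^ 2 - c ^ 2)) :
    ∃ α : ℝ, 0 < α ∧ ‖Tmap α (v2 a c)‖ = ‖Tmap α (v2 b d)‖ := by
  have hab : a ^ 2 - b ^ 2 ≠ 0 := by
    rintro hab
    simp [hab] at h
  set K := (d ^ 2 - c ^ 2) / (a ^ 2 - b ^ 2)
  have hK : 0 < K := by
    have := div_pos h (mul_self_pos.2 hab)
    rwa [mul_div_mul_left _ _ hab] at this
  have hβ : 0 < √K := Real.sqrt_pos.2 hK
  refine ⟨√√K, Real.sqrt_pos.2 hβ, ?_⟩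
  rw [← sq_eq_sq₀ (norm_nonneg _) (norm_nonneg _), norm_Tmap_v2_sq, norm_Tmap_v2_sq,
    Real.sq_sqrt hβ.le]
  have hK' : √K ^ 2 * (a ^ 2 - b ^ 2) = d ^ 2 - c ^ 2 := by
    rw [Real.sq_sqrt hK.le, div_mul_cancel₀ _ hab]
  field_simp
  linear_combination hK'

theorem sq_sub_sq_mul_sq_sub_sq_pos_of_abs_lt {a c b d : ℝ}
    (h : |a * c + b * d| < |a * d + b * c|) :
    0 < (a ^ 2 - b ^ 2) * (d ^ 2 - c ^ 2) := by
  have hsq := sq_lt_sq.2 h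
  linear_combination hsq

theorem stmt_5_general (a c b d : ℝ)
    (habcd : a * d + b * c ≠ 0)
    (h : |(a * c + b * d) / (a * d + b * c)| ≤ 1 / 2) :
    ∃ α : ℝ, 0 < α ∧ ‖Tmap α (v2 a c)‖ = ‖Tmap α (v2 b d)‖ := by
  have hpos : 0 < |a * d + b * c| := abs_pos.2 habcd
  have hlt : |a * c + b * d| < |a * d + b * c| := by
    rw [abs_div, div_le_iff₀ hpos] at h
    linarith
  exact exists_norm_Tmap_eq_of_mul_pos (sq_sub_sq_mul_sq_sub_sq_pos_of_abs_lt hlt)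

/-- If `|(ac + bd)/(ad + bc)| ≤ 1/2` then the basis `{(a,c), (b,d)}` is twistable. -/
theorem stmt_5 (a c b d : ℝ) (hli : LinearIndependent ℝ ![v2 a c, v2 b d])
    (habcd : a * d + b * c ≠ 0)
    (h : |(a * c + b * d) / (a * d + b * c)| ≤ 1 / 2) :
    ∃ α : ℝ, 0 < α ∧ ‖Tmap α (v2 a c)‖ = ‖Tmap α (v2 b d)‖ :=
  stmt_5_general a c b d habcd h
end
end

section
/- Let u, v ∈ ℂ. If (Im(u²) + Im(v²))² ≤ (Im(uv))², then min{(Im(u²))², (Im(v²))²} ≤ (Im(u·conj(v)))². -/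
open ComplexConjugate

theorem min_sq_le_sq_add_mul_add_sq {R : Type*} [CommRing R] [LinearOrder R] [IsStrictOrderedRing R]
    (p q : R) : min (p ^ 2) (q ^ 2) ≤ p ^ 2 + p * q + q ^ 2 := by
  rcases le_total |p| |q| with hpq | hqp
  · have : |p * q| ≤ q ^ 2 := by
      rw [abs_mul, ← sq_abs q, sq]
      exact mul_le_mul_of_nonneg_right hpq (abs_nonneg q)
    linarith [min_le_left (p ^ 2) (q ^ 2), neg_abs_le (p * q)]
  · have : |p * q| ≤ p ^ 2 := by
      rw [abs_mul, ← sq_abs p, sq]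
      exact mul_le_mul_of_nonneg_left hqp (abs_nonneg p)
    linarith [min_le_right (p ^ 2) (q ^ 2), neg_abs_le (p * q)]

theorem Complex.im_mul_sq_eq_im_mul_conj_sq_add (u v : ℂ) :
    (u * v).im ^ 2 = (u * conj v).im ^ 2 + (u ^ 2).im * (v ^ 2).im := by
  simp only [mul_im, conj_re, conj_im, pow_two]
  ring

/-- If `(Im(u²) + Im(v²))² ≤ Im(uv)²` then `min{Im(u²)², Im(v²)²} ≤ Im(u·conj v)²`. -/
theorem stmt_11 (u v : ℂ) (h : ((u ^ 2).im + (v ^ 2).im) ^ 2 ≤ ((u * v).im) ^ 2) :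
    min (((u ^ 2).im) ^ 2) (((v ^ 2).im) ^ 2) ≤ ((u * (starRingEnd ℂ) v).im) ^ 2 := by
  rw [Complex.im_mul_sq_eq_im_mul_conj_sq_add] at h
  calc min ((u ^ 2).im ^ 2) ((v ^ 2).im ^ 2)
      ≤ (u ^ 2).im ^ 2 + (u ^ 2).im * (v ^ 2).im + (v ^ 2).im ^ 2 :=
        min_sq_le_sq_add_mul_add_sq _ _
    _ ≤ (u * conj v).im ^ 2 := by linarith
end

section
/- Let D be a squarefree positive integer, K = ℚ(√−D) ⊂ ℂ (with √−D = i√D), 𝒪_K its ring of integers, and I a nonzero ideal of 𝒪_K. Then there exists a real number α > 0 such that the twist T_αΛ_K(I) is similar to the hexagonal lattice ℤ·(1, 0) + ℤ·(1/2, √3/2) if and only if I has a ℤ-basis {u, v} with Im(uv) ≠ 0 and F(u, v) = 0, where F(u, v) = (1/4)[(Im(u²) + Im(v²))² − (Im(uv))²]. -/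
open scoped RealInnerProductSpace

noncomputable section

/-- `√-D = i·√D` as a complex number. -/
def sqrtnD (D : ℕ) : ℂ := Complex.I * Real.sqrt D

/-- `δ = (1+√-D)/2` if `-D ≡ 1 [ZMOD 4]` (i.e. `D % 4 = 3`), and `δ = √-D` otherwise. -/
def deltaK (D : ℕ) : ℂ := if D % 4 = 3 then (1 + sqrtnD D) / 2 else sqrtnD D

/-- The ring of integers `𝒪_K = ℤ[δ]` of `K = ℚ(√-D)`, as a subring of `ℂ`. -/
def OK (D : ℕ) : Subring ℂ := Subring.closure {deltaK D}

/-- The set of complex numbers belonging to the ideal `I ⊆ 𝒪_K`. -/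
def idealSet (D : ℕ) (I : Ideal (OK D)) : Set ℂ := (fun z : OK D => (z : ℂ)) '' I

/-- The embedding `ι : ℂ → ℝ², w ↦ (Re w, -Im w)`. -/
def iotaC (w : ℂ) : E2 := v2 w.re (-w.im)

/-- The planar lattice `Λ_K(I) = ι(I)` attached to the ideal `I`. -/
def LamK (D : ℕ) (I : Ideal (OK D)) : Set E2 := iotaC '' idealSet D I

/-- `{u, v}` is a `ℤ`-basis of the set `S ⊆ ℂ`, i.e. `S = ℤu + ℤv`. -/
def IsZBasisOf (S : Set ℂ) (u v : ℂ) : Prop := S = {z | ∃ m n : ℤ, z = m * u + n * v}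

/-- `F(u, v) = (1/4)[(Im(u²) + Im(v²))² - Im(uv)²]`. -/
def Fgood (u v : ℂ) : ℝ := (1 / 4) * (((u ^ 2).im + (v ^ 2).im) ^ 2 - ((u * v).im) ^ 2)

/-!
Identify `ℝ²` with `ℂ`, so that `T_α ι(w)` becomes `α Re w - i Im w / α`. A lattice `ℤx + ℤy`
is similar to the hexagonal lattice `ℤ + ℤζ₆` exactly when it has a basis with `y / x` a
primitive sixth root of unity, i.e. `x² - xy + y² = 0`; reflections need no separate treatment
because the hexagonal lattice is stable under conjugation.

For the twisted images `x, y` of a basis `u = a + bi`, `v = c + di` of `I`, the imaginary part of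
`x² - xy + y²` is `-(Im u² - Im uv + Im v²)`, independent of `α`, while its real part is
`α²(a² - ac + c²) - (b² - bd + d²)/α²`. Both quadratic forms are positive when `Im(uv) ≠ 0`, so
`α` can always be chosen to kill the real part. The condition is therefore
`Im u² + Im v² = Im uv`, which `F(u, v) = 0` gives after possibly replacing `v` by `-v`; a
basis with `Im(uv) = 0` satisfying it is replaced by `(u, u + v)`.
-/

open Complex ComplexConjugate

def zspan (u v : ℂ) : Set ℂ := {z | ∃ m n : ℤ, z = m * u + n * v}

theorem image_zspan {F : Type*} [FunLike F ℂ ℂ] [AddMonoidHomClass F ℂ ℂ] (f : F) (u v : ℂ) :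
    f '' zspan u v = zspan (f u) (f v) := by
  have hf (m : ℤ) (u : ℂ) : f (m * u) = m * f u := by
    rw [← zsmul_eq_mul, map_zsmul, zsmul_eq_mul]
  ext z
  constructor
  · rintro ⟨_, ⟨m, n, rfl⟩, rfl⟩
    exact ⟨m, n, by rw [map_add, hf, hf]⟩
  · rintro ⟨m, n, rfl⟩
    exact ⟨_, ⟨m, n, rfl⟩, by rw [map_add, hf, hf]⟩

theorem image_zspan_eq_latticeOf {F : Type*} [FunLike F ℂ E2] [AddMonoidHomClass F ℂ E2] (f : F)
    (u v : ℂ) : f '' zspan u v = latticeOf (f u) (f v) := by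
  have hf (m : ℤ) (u : ℂ) : f (m * u) = m • f u := by
    rw [← zsmul_eq_mul, map_zsmul]
  ext z
  constructor
  · rintro ⟨_, ⟨m, n, rfl⟩, rfl⟩
    exact ⟨m, n, by rw [map_add, hf, hf]⟩
  · rintro ⟨m, n, rfl⟩
    exact ⟨_, ⟨m, n, rfl⟩, by rw [map_add, hf, hf]⟩

theorem zspan_neg_right (u v : ℂ) : zspan u (-v) = zspan u v := by
  ext z
  constructor <;> rintro ⟨m, n, rfl⟩ <;> exact ⟨m, -n, by push_cast; ring⟩

theorem zspan_add_right (u v : ℂ) : zspan u (u + v) = zspan u v := by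
  ext z
  constructor <;> rintro ⟨m, n, rfl⟩
  · exact ⟨m + n, n, by push_cast; ring⟩
  · exact ⟨m - n, n, by push_cast; ring⟩

theorem zspan_sub_right (u v : ℂ) : zspan u (u - v) = zspan u v := by
  rw [sub_eq_add_neg, zspan_add_right, zspan_neg_right]

def ζ₆ : ℂ := ⟨1 / 2, Real.sqrt 3 / 2⟩

theorem zeta6_sq : ζ₆ ^ 2 = ζ₆ - 1 := by
  have := Real.sq_sqrt (show (0 : ℝ) ≤ 3 by norm_num)
  apply Complex.ext <;> simp [ζ₆, pow_two] <;> nlinarith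

theorem conj_zeta6 : conj ζ₆ = 1 - ζ₆ := by
  apply Complex.ext <;> simp [ζ₆]; norm_num

theorem eq_zeta6_or_of_sq_sub_add_one {ω : ℂ} (h : ω ^ 2 - ω + 1 = 0) : ω = ζ₆ ∨ ω = 1 - ζ₆ := by
  have : (ω - ζ₆) * (ω - (1 - ζ₆)) = 0 := by linear_combination h - zeta6_sq
  rcases mul_eq_zero.1 this with h | h
  · exact .inl (sub_eq_zero.1 h)
  · exact .inr (sub_eq_zero.1 h)

theorem conj_image_zspan_one_zeta6 : conj '' zspan 1 ζ₆ = zspan 1 ζ₆ := by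
  rw [image_zspan, map_one, conj_zeta6, zspan_sub_right]

abbrev toE2 : ℂ ≃ₗᵢ[ℝ] E2 := Complex.orthonormalBasisOneI.repr

theorem toE2_apply (z : ℂ) : toE2 z = v2 z.re z.im := rfl

theorem hexagonal_eq_image_toE2 :
    latticeOf (v2 1 0) (v2 (1 / 2) (Real.sqrt 3 / 2)) = toE2 '' zspan 1 ζ₆ := by
  rw [image_zspan_eq_latticeOf, toE2_apply, toE2_apply]
  simp [ζ₆]

theorem image_smul_conjugate_toE2 (β : ℝ) (V : ℂ ≃ₗᵢ[ℝ] ℂ) (A : Set ℂ) :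
    (fun w => β • (toE2.symm.trans (V.trans toE2)) w) '' (toE2 '' A) =
      toE2 '' ((fun z => (β : ℂ) * V z) '' A) := by
  simp only [Set.image_image, LinearIsometryEquiv.trans_apply,
    LinearIsometryEquiv.symm_apply_apply, ← Complex.real_smul, map_smul]

theorem latSimilar_image_toE2_iff (A B : Set ℂ) :
    LatSimilar (toE2 '' A) (toE2 '' B) ↔
      ∃ β : ℝ, 0 < β ∧ ∃ V : ℂ ≃ₗᵢ[ℝ] ℂ, B = (fun z => (β : ℂ) * V z) '' A := by
  refine exists_congr fun β => and_congr_right fun _ => ⟨?_, ?_⟩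
  · rintro ⟨U, hU⟩
    refine ⟨toE2.trans (U.trans toE2.symm), toE2.injective.image_injective ?_⟩
    rw [hU, ← image_smul_conjugate_toE2]
    congr! 3
    ext w : 1
    simp only [LinearIsometryEquiv.trans_apply, LinearIsometryEquiv.apply_symm_apply]
  · rintro ⟨V, rfl⟩
    exact ⟨_, (image_smul_conjugate_toE2 β V A).symm⟩

theorem latSimilar_image_toE2_hexagonal_iff (T : Set ℂ) :
    LatSimilar (toE2 '' T) (toE2 '' zspan 1 ζ₆) ↔ ∃ c : ℂ, c ≠ 0 ∧ zspan 1 ζ₆ = (c * ·) '' T := by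
  rw [latSimilar_image_toE2_iff]
  constructor
  · rintro ⟨β, hβ, V, hV⟩
    have hβa (a : Circle) : (β : ℂ) * a ≠ 0 :=
      mul_ne_zero (ofReal_ne_zero.2 hβ.ne') a.coe_ne_zero
    obtain ⟨a, rfl | rfl⟩ := linear_isometry_complex V
    · refine ⟨β * a, hβa a, ?_⟩
      simpa only [rotation_apply, mul_assoc] using hV
    · refine ⟨conj (β * a), (map_ne_zero _).2 (hβa a), ?_⟩
      rw [← conj_image_zspan_one_zeta6, hV, Set.image_image]
      simp [rotation_apply, mul_assoc]
  · rintro ⟨c, hc, h⟩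
    refine ⟨‖c‖, norm_pos_iff.2 hc, rotation (Circle.exp (arg c)), ?_⟩
    simpa only [rotation_apply, Circle.coe_exp, ← mul_assoc, norm_mul_exp_arg_mul_I] using h

def IsHexagonalPair (x y : ℂ) : Prop := x ≠ 0 ∧ x ^ 2 - x * y + y ^ 2 = 0

theorem image_mul_left_zspan (c u v : ℂ) : (c * ·) '' zspan u v = zspan (c * u) (c * v) :=
  image_zspan (AddMonoidHom.mulLeft c) u v

theorem exists_mul_image_eq_zspan_one_zeta6_iff (T : Set ℂ) :
    (∃ c : ℂ, c ≠ 0 ∧ zspan 1 ζ₆ = (c * ·) '' T) ↔ ∃ x y, T = zspan x y ∧ IsHexagonalPair x y := by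
  constructor
  · rintro ⟨c, hc, h⟩
    refine ⟨c⁻¹, c⁻¹ * ζ₆, ?_, inv_ne_zero hc, by linear_combination c⁻¹ ^ 2 * zeta6_sq⟩
    calc T = (c⁻¹ * ·) '' ((c * ·) '' T) := by simp [Set.image_image, inv_mul_cancel_left₀ hc]
      _ = zspan c⁻¹ (c⁻¹ * ζ₆) := by rw [← h, image_mul_left_zspan, mul_one]
  · rintro ⟨x, y, rfl, hx, h⟩
    have hω : (y / x) ^ 2 - y / x + 1 = 0 := by
      field_simp
      linear_combination h
    refine ⟨x⁻¹, inv_ne_zero hx, ?_⟩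
    rw [image_mul_left_zspan, inv_mul_cancel₀ hx, inv_mul_eq_div]
    rcases eq_zeta6_or_of_sq_sub_add_one hω with hζ | hζ <;> rw [hζ]
    rw [zspan_sub_right]

def twist (α : ℝ) : ℂ →ₗ[ℝ] ℂ where
  toFun w := ⟨α * w.re, -w.im / α⟩
  map_add' u v := by apply Complex.ext <;> simp <;> ring
  map_smul' t w := by apply Complex.ext <;> simp <;> ring

@[simp] theorem twist_re (α : ℝ) (w : ℂ) : (twist α w).re = α * w.re := rfl

@[simp] theorem twist_im (α : ℝ) (w : ℂ) : (twist α w).im = -w.im / α := rfl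

theorem image_Tmap_image_iotaC (α : ℝ) (S : Set ℂ) :
    Tmap α '' (iotaC '' S) = toE2 '' (twist α '' S) := by
  simp only [Set.image_image]
  rfl

theorem twist_inv_twist {α : ℝ} (hα : α ≠ 0) (w : ℂ) : twist α⁻¹ (twist α w) = w := by
  apply Complex.ext <;> simp [hα]

theorem twist_twist_inv {α : ℝ} (hα : α ≠ 0) (w : ℂ) : twist α (twist α⁻¹ w) = w := by
  simpa using twist_inv_twist (inv_ne_zero hα) w

theorem exists_image_twist_eq_zspan_iff {α : ℝ} (hα : α ≠ 0) (S : Set ℂ) (P : ℂ → ℂ → Prop) :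
    (∃ x y, twist α '' S = zspan x y ∧ P x y) ↔
      ∃ u v, S = zspan u v ∧ P (twist α u) (twist α v) := by
  constructor
  · rintro ⟨x, y, h, hP⟩
    refine ⟨twist α⁻¹ x, twist α⁻¹ y, ?_, by rwa [twist_twist_inv hα, twist_twist_inv hα]⟩
    rw [← image_zspan, ← h, Set.image_image]
    simp [twist_inv_twist hα]
  · rintro ⟨u, v, rfl, hP⟩
    exact ⟨_, _, image_zspan _ u v, hP⟩

theorem twist_mul_im {α : ℝ} (hα : α ≠ 0) (u v : ℂ) :
    (twist α u * twist α v).im = -(u * v).im := by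
  simp only [mul_im, twist_re, twist_im]
  field_simp
  ring

theorem twist_mul_re (α : ℝ) (u v : ℂ) :
    (twist α u * twist α v).re = α ^ 2 * (u.re * v.re) - u.im * v.im / α ^ 2 := by
  simp only [mul_re, twist_re, twist_im]
  ring

theorem sq_sub_mul_add_sq_pos {a b : ℝ} (h : a ≠ 0 ∨ b ≠ 0) : 0 < a ^ 2 - a * b + b ^ 2 := by
  rcases h with h | h <;> nlinarith [sq_nonneg (a - b), sq_pos_of_ne_zero h]

theorem exists_isHexagonalPair_twist {u v : ℂ} (h : (u * v).im ≠ 0)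
    (hE : (u ^ 2).im + (v ^ 2).im = (u * v).im) :
    ∃ α, 0 < α ∧ IsHexagonalPair (twist α u) (twist α v) := by
  have hre : u.re ≠ 0 ∨ v.re ≠ 0 := by
    by_contra! h0
    simp [mul_im, h0] at h
  have him : u.im ≠ 0 ∨ v.im ≠ 0 := by
    by_contra! h0
    simp [mul_im, h0] at h
  set P := u.re ^ 2 - u.re * v.re + v.re ^ 2
  set Q := u.im ^ 2 - u.im * v.im + v.im ^ 2
  have hP : 0 < P := sq_sub_mul_add_sq_pos hre
  have hQ : 0 < Q := sq_sub_mul_add_sq_pos him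
  set α := √(√(Q / P))
  have hα : 0 < α := by positivity
  have hα4 : α ^ 2 * α ^ 2 * P = Q := by
    rw [Real.sq_sqrt (by positivity), Real.mul_self_sqrt (by positivity), div_mul_cancel₀ _ hP.ne']
  refine ⟨α, hα, fun h0 => ?_, ?_⟩
  · rw [← twist_inv_twist hα.ne' u, h0, map_zero, zero_mul, zero_im] at h
    exact h rfl
  · apply Complex.ext
    · simp only [pow_two, sub_re, add_re, twist_mul_re, zero_re]
      field_simp
      linear_combination hα4
    · simp only [pow_two, sub_im, add_im, twist_mul_im hα.ne', zero_im] at hE ⊢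
      linarith

theorem IsHexagonalPair.im_mul_ne_zero_or_im_sq_ne_zero {x y : ℂ} (h : IsHexagonalPair x y) :
    (x * y).im ≠ 0 ∨ (x ^ 2).im ≠ 0 := by
  by_contra! hreal
  obtain ⟨p, hp⟩ : ∃ p : ℝ, x ^ 2 = p := ⟨(x ^ 2).re, Complex.ext rfl (by simp [hreal.2])⟩
  obtain ⟨q, hq⟩ : ∃ q : ℝ, x * y = q := ⟨(x * y).re, Complex.ext rfl (by simp [hreal.1])⟩
  -- `q / p` would be a real root of `t ^ 2 - t + 1`
  have hpq : q ^ 2 - p * q + p ^ 2 = 0 := by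
    have : (q : ℂ) ^ 2 - p * q + p ^ 2 = 0 := by
      rw [← hp, ← hq]
      linear_combination x ^ 2 * h.2
    exact_mod_cast this
  have hp0 : p = 0 := by nlinarith [sq_nonneg (2 * q - p)]
  exact h.1 (pow_eq_zero_iff two_ne_zero |>.1 (by rw [hp, hp0, ofReal_zero]))

theorem fgood_eq_zero_iff (u v : ℂ) :
    Fgood u v = 0 ↔
      (u ^ 2).im + (v ^ 2).im = (u * v).im ∨ (u ^ 2).im + (v ^ 2).im = -(u * v).im := by
  have hF : Fgood u v = 1 / 4 * (((u ^ 2).im + (v ^ 2).im - (u * v).im) *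
      ((u ^ 2).im + (v ^ 2).im + (u * v).im)) := by
    rw [Fgood]
    ring
  simp [hF, sub_eq_zero, add_eq_zero_iff_eq_neg]

theorem exists_zspan_eq_fgood_eq_zero {u v : ℂ} (hE : (u ^ 2).im + (v ^ 2).im = (u * v).im)
    (h : (u * v).im ≠ 0 ∨ (u ^ 2).im ≠ 0) :
    ∃ u' v', zspan u' v' = zspan u v ∧ (u' * v').im ≠ 0 ∧ Fgood u' v' = 0 := by
  by_cases huv : (u * v).im = 0
  · have hsq : ((u + v) ^ 2).im = 0 := by
      simp only [pow_two, add_mul, mul_add, add_im, mul_comm v u] at hE ⊢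
      linarith
    have hu : (u * (u + v)).im = (u ^ 2).im := by
      rw [mul_add, add_im, huv, add_zero, pow_two]
    refine ⟨u, u + v, zspan_add_right u v, hu ▸ h.resolve_left (not_not.2 huv), ?_⟩
    rw [fgood_eq_zero_iff, hsq, hu, add_zero]
    exact .inl rfl
  · exact ⟨u, v, rfl, huv, (fgood_eq_zero_iff u v).2 (.inl hE)⟩

theorem exists_zspan_eq_fgood_eq_zero_of_isHexagonalPair_twist {α : ℝ} (hα : α ≠ 0) {u v : ℂ}
    (h : IsHexagonalPair (twist α u) (twist α v)) :
    ∃ u' v', zspan u' v' = zspan u v ∧ (u' * v').im ≠ 0 ∧ Fgood u' v' = 0 := by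
  have hE : (u ^ 2).im + (v ^ 2).im = (u * v).im := by
    have := congrArg im h.2
    simp only [pow_two, sub_im, add_im, twist_mul_im hα, zero_im] at this ⊢
    linarith
  have hne := h.im_mul_ne_zero_or_im_sq_ne_zero
  rw [pow_two, twist_mul_im hα, twist_mul_im hα, neg_ne_zero, neg_ne_zero, ← pow_two] at hne
  exact exists_zspan_eq_fgood_eq_zero hE hne

theorem exists_isHexagonalPair_twist_of_fgood_eq_zero {u v : ℂ} (h : (u * v).im ≠ 0)
    (hF : Fgood u v = 0) :
    ∃ α, 0 < α ∧ ∃ u' v', zspan u' v' = zspan u v ∧ IsHexagonalPair (twist α u') (twist α v') := by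
  rcases (fgood_eq_zero_iff u v).1 hF with hE | hE
  · obtain ⟨α, hα, hpair⟩ := exists_isHexagonalPair_twist h hE
    exact ⟨α, hα, u, v, rfl, hpair⟩
  · obtain ⟨α, hα, hpair⟩ := exists_isHexagonalPair_twist (u := u) (v := -v)
      (by rwa [mul_neg, neg_im, neg_ne_zero]) (by rwa [neg_sq, mul_neg, neg_im])
    exact ⟨α, hα, u, -v, zspan_neg_right u v, hpair⟩

theorem stmt_12_general (D : ℕ) (I : Ideal (OK D)) :
    (∃ α : ℝ, 0 < α ∧
        LatSimilar (Tmap α '' LamK D I)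
          (latticeOf (v2 1 0) (v2 (1 / 2) (Real.sqrt 3 / 2)))) ↔
      ∃ u v : ℂ, IsZBasisOf (idealSet D I) u v ∧ (u * v).im ≠ 0 ∧ Fgood u v = 0 := by
  calc _ ↔ ∃ α : ℝ, 0 < α ∧ ∃ u v, idealSet D I = zspan u v ∧
        IsHexagonalPair (twist α u) (twist α v) := by
        refine exists_congr fun α => and_congr_right fun hα => ?_
        rw [LamK, image_Tmap_image_iotaC, hexagonal_eq_image_toE2,
          latSimilar_image_toE2_hexagonal_iff, exists_mul_image_eq_zspan_one_zeta6_iff,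
          exists_image_twist_eq_zspan_iff hα.ne']
    _ ↔ _ := by
      constructor
      · rintro ⟨α, hα, u, v, hS, h⟩
        obtain ⟨u', v', huv, h'⟩ := exists_zspan_eq_fgood_eq_zero_of_isHexagonalPair_twist hα.ne' h
        exact ⟨u', v', hS.trans huv.symm, h'⟩
      · rintro ⟨u, v, hS, h, hF⟩
        obtain ⟨α, hα, u', v', huv, h'⟩ := exists_isHexagonalPair_twist_of_fgood_eq_zero h hF
        exact ⟨α, hα, u', v', hS.trans huv.symm, h'⟩

/-- The hexagonal lattice is a twist of `Λ_K(I)` iff `I` has a `ℤ`-basis `{u, v}` with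
`Im(uv) ≠ 0` and `F(u, v) = 0`. -/
theorem stmt_12 (D : ℕ) (hD : Squarefree D) (hD0 : 0 < D)
    (I : Ideal (OK D)) (hI : I ≠ ⊥) :
    (∃ α : ℝ, 0 < α ∧
        LatSimilar (Tmap α '' LamK D I)
          (latticeOf (v2 1 0) (v2 (1 / 2) (Real.sqrt 3 / 2)))) ↔
      ∃ u v : ℂ, IsZBasisOf (idealSet D I) u v ∧ (u * v).im ≠ 0 ∧ Fgood u v = 0 :=
  stmt_12_general D I
end
end

section
/- Let D be a squarefree positive integer, K = ℚ(√−D) ⊂ ℂ (with √−D = i√D), 𝒪_K its ring of integers, and I a nonzero ideal of 𝒪_K. Then the set of elements x ∈ I for which there exists y ∈ I such that {x, y} is a good basis of I is finite. -/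
open scoped RealInnerProductSpace

noncomputable section

/-!
Write `x = a + bi`, `y = c + di`. Expanding, `F(x, y) ≤ 0` forces `|ab| ≤ |ad - bc|`, and
`|ad - bc|`, the covolume of `I = ℤx + ℤy`, divides the area spanned by any two elements of `I`,
so it is bounded independently of the basis. Since `𝒪_K = ℤ[δ]` lies in the rectangular lattice
`½ℤ + ℤ·(Im δ)i`, each of `a, b, c, d` is either zero or bounded away from zero; in every case this
bounds both `|a|` and `|b|`, and a lattice has only finitely many points in a bounded region.
-/

namespace GoodBasis

open Complex ComplexConjugate

def intSpan (u v : ℂ) : Set ℂ := {z | ∃ m n : ℤ, z = m * u + n * v}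

lemma left_mem_intSpan (u v : ℂ) : u ∈ intSpan u v := ⟨1, 0, by simp⟩

lemma right_mem_intSpan (u v : ℂ) : v ∈ intSpan u v := ⟨0, 1, by simp⟩

/-- The oriented area `Im (conj u * v)` of the parallelogram spanned by `u` and `v`. -/
def wedge (u v : ℂ) : ℝ := u.re * v.im - u.im * v.re

lemma abs_wedge_le (u v : ℂ) : |wedge u v| ≤ ‖u‖ * ‖v‖ := by
  have h : wedge u v = (conj u * v).im := by simp only [wedge, mul_im, conj_re, conj_im]; ring
  calc |wedge u v| ≤ ‖conj u * v‖ := h ▸ abs_im_le_norm _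
    _ = ‖u‖ * ‖v‖ := by rw [norm_mul, norm_conj]

lemma wedge_self_mul (δ z : ℂ) : wedge z (δ * z) = δ.im * normSq z := by
  simp only [wedge, normSq_apply, mul_re, mul_im]
  ring

lemma wedge_intCast_mul_add (x y : ℂ) (m n p q : ℤ) :
    wedge (m * x + n * y) (p * x + q * y) = ((m * q - n * p : ℤ) : ℝ) * wedge x y := by
  simp only [wedge, add_re, add_im, mul_re, mul_im, intCast_re, intCast_im]
  push_cast
  ring

lemma exists_wedge_eq_intCast_mul {x y p q : ℂ} (hp : p ∈ intSpan x y) (hq : q ∈ intSpan x y) :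
    ∃ k : ℤ, wedge p q = k * wedge x y := by
  obtain ⟨m, n, rfl⟩ := hp
  obtain ⟨m', n', rfl⟩ := hq
  exact ⟨_, wedge_intCast_mul_add x y m n m' n'⟩

lemma wedge_ne_zero_and_abs_le {x y p q : ℂ} (hp : p ∈ intSpan x y) (hq : q ∈ intSpan x y)
    (hpq : wedge p q ≠ 0) : wedge x y ≠ 0 ∧ |wedge x y| ≤ |wedge p q| := by
  obtain ⟨k, hk⟩ := exists_wedge_eq_intCast_mul hp hq
  have hk0 : k ≠ 0 := by rintro rfl; simp [hk] at hpq
  refine ⟨fun h => hpq (by simp [hk, h]), ?_⟩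
  rw [hk, abs_mul]
  exact le_mul_of_one_le_left (abs_nonneg _) (by exact_mod_cast Int.one_le_abs hk0)

lemma mem_Icc_ceil_of_abs_mul_le {m : ℤ} {r c : ℝ} (hc : 0 < c) (h : |(m : ℝ)| * c ≤ r) :
    m ∈ Set.Icc (-⌈r / c⌉) ⌈r / c⌉ := by
  have hm : |(m : ℝ)| ≤ ⌈r / c⌉ := ((le_div_iff₀ hc).2 h).trans (Int.le_ceil _)
  exact abs_le.mp (by exact_mod_cast hm)

/-- The coordinates of `z = mα + nβ` are `m = wedge z β / wedge α β` and
`n = wedge α z / wedge α β`, both bounded by `‖z‖` up to a constant. -/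
lemma finite_intSpan_inter_closedBall {α β : ℂ} (h : wedge α β ≠ 0) (R : ℝ) :
    (intSpan α β ∩ Metric.closedBall 0 R).Finite := by
  set c := |wedge α β|
  have hc : 0 < c := abs_pos.2 h
  refine (((Set.finite_Icc (-⌈R * ‖β‖ / c⌉) ⌈R * ‖β‖ / c⌉).prod
    (Set.finite_Icc (-⌈R * ‖α‖ / c⌉) ⌈R * ‖α‖ / c⌉)).image
      fun p : ℤ × ℤ => (p.1 : ℂ) * α + p.2 * β).subset ?_
  rintro _ ⟨⟨m, n, rfl⟩, hz⟩
  rw [mem_closedBall_zero_iff] at hz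
  refine ⟨(m, n), ⟨mem_Icc_ceil_of_abs_mul_le hc ?_, mem_Icc_ceil_of_abs_mul_le hc ?_⟩, rfl⟩
  · have e : wedge (m * α + n * β) β = m * wedge α β := by
      simpa using wedge_intCast_mul_add α β m n 0 1
    calc |(m : ℝ)| * c = |wedge (m * α + n * β) β| := by rw [e, abs_mul]
      _ ≤ ‖(m : ℂ) * α + n * β‖ * ‖β‖ := abs_wedge_le _ _
      _ ≤ R * ‖β‖ := mul_le_mul_of_nonneg_right hz (norm_nonneg _)
  · have e : wedge α (m * α + n * β) = n * wedge α β := by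
      simpa using wedge_intCast_mul_add α β 1 0 m n
    calc |(n : ℝ)| * c = |wedge α (m * α + n * β)| := by rw [e, abs_mul]
      _ ≤ ‖α‖ * ‖(m : ℂ) * α + n * β‖ := abs_wedge_le _ _
      _ ≤ ‖α‖ * R := mul_le_mul_of_nonneg_left hz (norm_nonneg _)
      _ = R * ‖α‖ := mul_comm _ _

lemma intCast_mul_eq_zero_or_le_abs (k : ℤ) {c : ℝ} (hc : 0 ≤ c) :
    (k : ℝ) * c = 0 ∨ c ≤ |(k : ℝ) * c| := by
  rcases eq_or_ne k 0 with rfl | hk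
  · simp
  · right
    rw [abs_mul, abs_of_nonneg hc]
    exact le_mul_of_one_le_left hc (by exact_mod_cast Int.one_le_abs hk)

lemma re_eq_zero_or_half_le_abs {τ : ℝ} {z : ℂ} (hz : z ∈ intSpan (1 / 2) (τ * I)) :
    z.re = 0 ∨ 1 / 2 ≤ |z.re| := by
  obtain ⟨m, n, rfl⟩ := hz
  simpa using intCast_mul_eq_zero_or_le_abs m (by norm_num : (0 : ℝ) ≤ 1 / 2)

lemma im_eq_zero_or_le_abs {τ : ℝ} (hτ : 0 ≤ τ) {z : ℂ} (hz : z ∈ intSpan (1 / 2) (τ * I)) :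
    z.im = 0 ∨ τ ≤ |z.im| := by
  obtain ⟨m, n, rfl⟩ := hz
  simpa using intCast_mul_eq_zero_or_le_abs n hτ

lemma abs_mul_le_abs_sub_of_gap {a b c d g : ℝ} (hw : a * d - b * c ≠ 0)
    (hab : |a * b| ≤ |a * d - b * c|) (hb : b = 0 ∨ g ≤ |b|) (hd : d = 0 ∨ g ≤ |d|) :
    |a| * g ≤ |a * d - b * c| := by
  rcases hb with rfl | hb
  · rcases hd with rfl | hd
    · simp at hw
    · calc |a| * g ≤ |a| * |d| := mul_le_mul_of_nonneg_left hd (abs_nonneg a)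
        _ = |a * d - 0 * c| := by rw [zero_mul, sub_zero, abs_mul]
  · exact (mul_le_mul_of_nonneg_left hb (abs_nonneg a)).trans (by rwa [← abs_mul])

lemma abs_re_mul_im_le_abs_wedge {x y : ℂ} (hF : Fgood x y ≤ 0) :
    |x.re * x.im| ≤ |wedge x y| := by
  have key : wedge x y ^ 2 = (x.re * x.im) ^ 2 + 2 * (x.re * x.im) ^ 2
      + (x.re * x.im + 2 * (y.re * y.im)) ^ 2 - 4 * Fgood x y := by
    simp only [wedge, Fgood, pow_two, mul_im]
    ring
  exact sq_le_sq.mp (by nlinarith [sq_nonneg (x.re * x.im + 2 * (y.re * y.im))])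

lemma norm_le_of_Fgood_nonpos {τ : ℝ} (hτ : 0 < τ) {x y : ℂ}
    (hx : x ∈ intSpan (1 / 2) (τ * I)) (hy : y ∈ intSpan (1 / 2) (τ * I))
    (hw : wedge x y ≠ 0) (hF : Fgood x y ≤ 0) :
    ‖x‖ ≤ |wedge x y| / τ + 2 * |wedge x y| := by
  have hab := abs_re_mul_im_le_abs_wedge hF
  have hre : |x.re| * τ ≤ |wedge x y| := abs_mul_le_abs_sub_of_gap hw hab
    (im_eq_zero_or_le_abs hτ.le hx) (im_eq_zero_or_le_abs hτ.le hy)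
  have hswap : |wedge x y| = |x.im * y.re - x.re * y.im| := by
    rw [← abs_neg]; congr 1; rw [wedge]; ring
  have him : |x.im| * (1 / 2) ≤ |wedge x y| := hswap ▸ abs_mul_le_abs_sub_of_gap
    (fun h => hw (by rw [wedge]; linarith)) (by rwa [mul_comm, ← hswap])
    (re_eq_zero_or_half_le_abs hx) (re_eq_zero_or_half_le_abs hy)
  calc ‖x‖ ≤ |x.re| + |x.im| := norm_le_abs_re_add_abs_im x
    _ ≤ |wedge x y| / τ + 2 * |wedge x y| := by
      have := (le_div_iff₀ hτ).2 hre
      linarith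

lemma sqrtnD_sq (D : ℕ) : sqrtnD D ^ 2 = -D := by
  rw [sqrtnD, mul_pow, I_sq, ← ofReal_pow, Real.sq_sqrt (Nat.cast_nonneg D)]
  push_cast
  ring

lemma deltaK_sq (D : ℕ) : ∃ c e : ℤ, deltaK D ^ 2 = c + e * deltaK D := by
  by_cases h : D % 4 = 3
  · refine ⟨-((D : ℤ) / 4 + 1), 1, ?_⟩
    have hD : (D : ℂ) = 4 * (((D : ℤ) / 4 : ℤ) : ℂ) + 3 := by
      exact_mod_cast (by omega : (D : ℤ) = 4 * ((D : ℤ) / 4) + 3)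
    rw [deltaK, if_pos h]
    push_cast
    linear_combination (1 / 4 : ℂ) * sqrtnD_sq D - (1 / 4 : ℂ) * hD
  · exact ⟨-(D : ℤ), 0, by rw [deltaK, if_neg h, sqrtnD_sq]; push_cast; ring⟩

lemma mem_intSpan_of_mem_OK {D : ℕ} {z : ℂ} (hz : z ∈ OK D) : z ∈ intSpan 1 (deltaK D) := by
  induction hz using Subring.closure_induction with
  | mem x hx => exact (Set.mem_singleton_iff.mp hx) ▸ right_mem_intSpan _ _
  | zero => exact ⟨0, 0, by simp⟩
  | one => exact left_mem_intSpan _ _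
  | add x y _ _ hx hy =>
    obtain ⟨m, n, rfl⟩ := hx
    obtain ⟨p, q, rfl⟩ := hy
    exact ⟨m + p, n + q, by push_cast; ring⟩
  | neg x _ hx =>
    obtain ⟨m, n, rfl⟩ := hx
    exact ⟨-m, -n, by push_cast; ring⟩
  | mul x y _ _ hx hy =>
    obtain ⟨m, n, rfl⟩ := hx
    obtain ⟨p, q, rfl⟩ := hy
    obtain ⟨c, e, hce⟩ := deltaK_sq D
    exact ⟨m * p + n * q * c, m * q + n * p + n * q * e, by
      push_cast; linear_combination (n : ℂ) * q * hce⟩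

lemma intSpan_one_deltaK_subset (D : ℕ) :
    intSpan 1 (deltaK D) ⊆ intSpan (1 / 2) ((deltaK D).im * I) := by
  obtain ⟨k, hk⟩ : ∃ k : ℤ, (deltaK D).re = k / 2 := by
    unfold deltaK
    split_ifs
    · exact ⟨1, by simp [sqrtnD]⟩
    · exact ⟨0, by simp [sqrtnD]⟩
  rintro _ ⟨m, n, rfl⟩
  exact ⟨2 * m + n * k, n, Complex.ext (by simp [hk]; ring) (by simp)⟩

lemma deltaK_im_pos {D : ℕ} (hD : 0 < D) : 0 < (deltaK D).im := by
  unfold deltaK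
  split_ifs <;> simp [sqrtnD, hD]

end GoodBasis

open GoodBasis in
theorem stmt_14_general (D : ℕ) (hD0 : 0 < D)
    (I : Ideal (OK D)) (hI : I ≠ ⊥) :
    {x : ℂ | x ∈ idealSet D I ∧
        ∃ y : ℂ, IsZBasisOf (idealSet D I) x y ∧ (x * y).im ≠ 0 ∧ Fgood x y ≤ 0}.Finite := by
  set δ := deltaK D
  have hτ : 0 < δ.im := deltaK_im_pos hD0
  have hL : idealSet D I ⊆ intSpan (1 / 2) (δ.im * Complex.I) := by
    rintro _ ⟨u, -, rfl⟩
    exact intSpan_one_deltaK_subset D (mem_intSpan_of_mem_OK u.2)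
  obtain ⟨z, hzI, hz0⟩ := Submodule.exists_mem_ne_zero_of_ne_bot hI
  have hδz : wedge z (δ * z) ≠ 0 := by
    rw [wedge_self_mul]
    exact mul_ne_zero hτ.ne' (Complex.normSq_pos.2 (by exact_mod_cast hz0)).ne'
  set Δ := |wedge z (δ * z)|
  have hwL : wedge (1 / 2) (δ.im * Complex.I) ≠ 0 := by simp [wedge, hτ.ne']
  refine ((finite_intSpan_inter_closedBall hwL (Δ / δ.im + 2 * Δ)).subset ?_)
  rintro x ⟨hx, y, hxy, -, hF⟩
  have hS : idealSet D I = intSpan x y := hxy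
  have hz : (z : ℂ) ∈ intSpan x y := hS ▸ ⟨z, hzI, rfl⟩
  have hδz' : δ * z ∈ intSpan x y :=
    hS ▸ ⟨⟨δ, Subring.subset_closure rfl⟩ * z, I.mul_mem_left _ hzI, rfl⟩
  obtain ⟨hw, hwΔ⟩ := wedge_ne_zero_and_abs_le hz hδz' hδz
  refine ⟨hL hx, mem_closedBall_zero_iff.2 ?_⟩
  calc ‖x‖ ≤ |wedge x y| / δ.im + 2 * |wedge x y| :=
        norm_le_of_Fgood_nonpos hτ (hL hx) (hL (hS ▸ right_mem_intSpan x y)) hw hF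
    _ ≤ Δ / δ.im + 2 * Δ := by gcongr

/-- Only finitely many elements of a nonzero ideal `I` of `𝒪_K` can be extended to a good
basis of `I`. -/
theorem stmt_14 (D : ℕ) (hD : Squarefree D) (hD0 : 0 < D)
    (I : Ideal (OK D)) (hI : I ≠ ⊥) :
    {x : ℂ | x ∈ idealSet D I ∧
        ∃ y : ℂ, IsZBasisOf (idealSet D I) x y ∧ (x * y).im ≠ 0 ∧ Fgood x y ≤ 0}.Finite :=
  stmt_14_general D hD0 I hI
end
end

section
/- Let D be a squarefree positive integer, K = ℚ(√−D) ⊂ ℂ (with √−D = i√D), 𝒪_K its ring of integers, I a nonzero ideal of 𝒪_K, and x ∈ I with (Im(x²))² ≤ vol²(Λ_K(I)). Then there exist two full-rank lattices L₁, L₂ ⊆ ℝ² such that for every y ∈ I for which {x, y} is a good basis of I and for every α > 0 with ‖T_α ι(x)‖ = ‖T_α ι(y)‖, the twist lattice T_αΛ_K(I) is similar to L₁ or to L₂ (i.e., x can be extended to at most two good bases of I, up to similarity of the resulting well-rounded twists). -/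
open scoped RealInnerProductSpace

noncomputable section

/-- `Λ₁ ∼ Λ₂`: there are `α > 0` and an orthogonal transformation `U` with `Λ₂ = αUΛ₁`. -/
def SimilarLat (Λ₁ Λ₂ : Set E2) : Prop :=
  ∃ α : ℝ, 0 < α ∧ ∃ U : (E2 ≃ₗᵢ[ℝ] E2), Λ₂ = (fun w => α • U w) '' Λ₁

/-!
Write `W = Im(xy)` and `s = Im(x²) + Im(y²)`, so that `F(x, y) ≤ 0` iff `s² ≤ W²`. In `ℂ` the
twist is `τ_α(a + bi) = αa + ib/α`, which preserves `Im(uv)`.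

Any other basis containing `x` is `{x, ±(y + kx)}`. With `W' = Im(x(y + kx))` and `e = s + kW`,
goodness of both bases reads `(e - kW)² ≤ W²` and `(e + kW')² ≤ W'²`, which forces `e = 0` once
`k ≠ 0` and `W W' > 0`. For `u = τ_α x`, `v = τ_α y` with `‖u‖ = ‖v‖` one has
`W (‖v + ku‖² - ‖v‖²) = k ‖u‖² e`, so then `y + kx` is balanced by the same `α`; and a good
basis is balanced by at most one `α > 0`. Hence two good bases `{x, y}`, `{x, y'}` for which
`Im(xy) Im(x ȳ)` and `Im(xy') Im(x ȳ')` have the same sign give the same twist, and there are only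
two signs.
-/

open ComplexConjugate

def twistC (α : ℝ) (w : ℂ) : ℂ := ⟨α * w.re, w.im / α⟩

@[simp] lemma twistC_re (α : ℝ) (w : ℂ) : (twistC α w).re = α * w.re := rfl

@[simp] lemma twistC_im (α : ℝ) (w : ℂ) : (twistC α w).im = w.im / α := rfl

lemma Tmap_iotaC (α : ℝ) (w : ℂ) : Tmap α (iotaC w) = iotaC (twistC α w) := by
  simp [Tmap, iotaC, v2, neg_div]

lemma norm_iotaC (w : ℂ) : ‖iotaC w‖ = ‖w‖ := by
  rw [EuclideanSpace.norm_eq, Complex.norm_eq_sqrt_sq_add_sq, Fin.sum_univ_two]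
  simp [iotaC, v2]

lemma twistC_add_intCast_mul (α : ℝ) (x y : ℂ) (k : ℤ) :
    twistC α (y + k * x) = twistC α y + k * twistC α x := by
  apply Complex.ext <;> simp <;> ring

lemma twistC_neg (α : ℝ) (w : ℂ) : twistC α (-w) = -twistC α w := by
  apply Complex.ext <;> simp [neg_div]

lemma im_twistC_mul_twistC {α : ℝ} (hα : α ≠ 0) (x y : ℂ) :
    (twistC α x * twistC α y).im = (x * y).im := by
  simp only [Complex.mul_im, twistC_re, twistC_im]
  field_simp

lemma im_mul_conj_add_intCast_mul (x y : ℂ) (k : ℤ) :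
    (x * conj (y + k * x)).im = (x * conj y).im := by
  simp only [map_add, map_mul, map_intCast, mul_add, Complex.add_im, Complex.mul_im,
    Complex.mul_re, Complex.conj_re, Complex.conj_im, Complex.intCast_re, Complex.intCast_im]
  ring

lemma Fgood_nonpos_iff (u v : ℂ) :
    Fgood u v ≤ 0 ↔ ((u ^ 2).im + (v ^ 2).im) ^ 2 ≤ ((u * v).im) ^ 2 := by
  rw [Fgood]
  constructor <;> intro h <;> linarith

lemma Fgood_neg_right (u v : ℂ) : Fgood u (-v) = Fgood u v := by
  simp only [Fgood, neg_sq, mul_neg, Complex.neg_im]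

lemma im_mul_conj_ne_zero_of_Fgood_nonpos {u v : ℂ} (hF : Fgood u v ≤ 0) (hW : (u * v).im ≠ 0) :
    (u * conj v).im ≠ 0 := by
  rw [Fgood_nonpos_iff] at hF
  simp only [sq, Complex.mul_im, Complex.conj_re, Complex.conj_im] at hF hW ⊢
  intro hV
  have hWQP : (u.re * v.im + u.im * v.re) ^ 2 = 4 * (u.re * u.im) * (v.re * v.im) := by
    linear_combination (u.re * v.im + u.im * v.re - 2 * (u.re * v.im)) * hV
  have hQP : (u.re * u.im) ^ 2 + (u.re * u.im) * (v.re * v.im) + (v.re * v.im) ^ 2 ≤ 0 := by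
    nlinarith
  have hQ : u.re * u.im = 0 := by nlinarith [sq_nonneg (u.re * u.im + 2 * (v.re * v.im))]
  exact hW (pow_eq_zero_iff two_ne_zero |>.1 (by rw [hWQP, hQ]; ring))

lemma eq_zero_of_sq_sub_mul_le {e k W W' : ℝ} (hk : 1 ≤ k ^ 2) (h : (e - k * W) ^ 2 ≤ W ^ 2)
    (h' : (e + k * W') ^ 2 ≤ W' ^ 2) (hWW' : 0 < W * W') : e = 0 := by
  have h₁ : e ^ 2 ≤ 2 * k * W * e := by nlinarith [sq_nonneg W]
  have h₂ : e ^ 2 ≤ -(2 * k * W' * e) := by nlinarith [sq_nonneg W']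
  have h₃ : e ^ 2 * e ^ 2 ≤ -(4 * k ^ 2 * e ^ 2 * (W * W')) := by
    nlinarith [mul_le_mul h₁ h₂ (sq_nonneg e) ((sq_nonneg e).trans h₁)]
  have h₄ : e ^ 2 * e ^ 2 = 0 :=
    le_antisymm (h₃.trans (neg_nonpos.mpr (mul_nonneg (by positivity) hWW'.le))) (by positivity)
  simpa using h₄

lemma norm_add_mul_eq_norm {u v : ℂ} {k : ℝ} (huv : ‖u‖ = ‖v‖) (hW : (u * v).im ≠ 0)
    (he : k * ((u ^ 2).im + (v ^ 2).im + k * (u * v).im) = 0) : ‖v + k * u‖ = ‖v‖ := by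
  rw [← sq_eq_sq₀ (norm_nonneg _) (norm_nonneg _), Complex.sq_norm, Complex.sq_norm] at huv ⊢
  simp only [Complex.normSq_apply, sq, Complex.mul_im, Complex.add_re, Complex.add_im,
    Complex.mul_re, Complex.ofReal_re, Complex.ofReal_im] at huv he hW ⊢
  apply mul_left_cancel₀ hW
  linear_combination (u.re * u.re + u.im * u.im) * he - 2 * k * (u.re * u.im) * huv

lemma im_sq_add_im_sq_add_mul_eq_zero {x y : ℂ} {k : ℤ} (hk : k ≠ 0) (hF : Fgood x y ≤ 0)
    (hF' : Fgood x (y + k * x) ≤ 0) (hWW' : 0 < (x * y).im * (x * (y + k * x)).im) :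
    (x ^ 2).im + (y ^ 2).im + k * (x * y).im = 0 := by
  have hk1 : (1 : ℝ) ≤ (k : ℝ) ^ 2 := by
    exact_mod_cast one_le_sq_iff_one_le_abs _ |>.mpr (Int.one_le_abs hk)
  have hW' : (x * (y + k * x)).im = (x * y).im + k * (x ^ 2).im := by
    simp only [sq, mul_add, Complex.add_im, Complex.mul_im, Complex.mul_re, Complex.intCast_re,
      Complex.intCast_im]
    ring
  have hs' : (x ^ 2).im + ((y + k * x) ^ 2).im
      = (x ^ 2).im + (y ^ 2).im + k * (x * y).im + k * (x * (y + k * x)).im := by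
    rw [hW']
    simp only [sq, mul_add, add_mul, Complex.add_im, Complex.mul_im, Complex.mul_re,
      Complex.intCast_re, Complex.intCast_im]
    ring
  refine eq_zero_of_sq_sub_mul_le hk1 ?_ ?_ hWW'
  · rw [add_sub_cancel_right]
    exact (Fgood_nonpos_iff x y).1 hF
  · rw [← hs']
    exact (Fgood_nonpos_iff x _).1 hF'

lemma sq_re_ne_of_Fgood_nonpos {x y : ℂ} (hF : Fgood x y ≤ 0) (hW : (x * y).im ≠ 0) :
    x.re ^ 2 ≠ y.re ^ 2 := by
  intro hre
  have hs : (x ^ 2).im + (y ^ 2).im = 2 * (x * y).im ∨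
      (x ^ 2).im + (y ^ 2).im = -(2 * (x * y).im) := by
    simp only [sq, Complex.mul_im]
    rcases sq_eq_sq_iff_eq_or_eq_neg.1 hre with h | h <;> rw [h]
    · left; ring
    · right; ring
  have hW2 : (x * y).im ^ 2 ≤ 0 := by
    rw [Fgood_nonpos_iff] at hF
    rcases hs with h | h <;> rw [h] at hF <;> linarith
  exact hW (pow_eq_zero_iff two_ne_zero |>.1 (le_antisymm hW2 (sq_nonneg _)))

lemma eq_of_norm_twistC_eq {x y : ℂ} {α α' : ℝ} (hF : Fgood x y ≤ 0)
    (hW : (x * y).im ≠ 0) (hα : 0 < α) (hα' : 0 < α')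
    (h : ‖twistC α x‖ = ‖twistC α y‖) (h' : ‖twistC α' x‖ = ‖twistC α' y‖) : α = α' := by
  have balance : ∀ β : ℝ, 0 < β → ‖twistC β x‖ = ‖twistC β y‖ →
      β ^ 4 * (x.re ^ 2 - y.re ^ 2) = y.im ^ 2 - x.im ^ 2 := by
    intro β hβ hb
    rw [← sq_eq_sq₀ (norm_nonneg _) (norm_nonneg _), Complex.sq_norm, Complex.sq_norm] at hb
    simp only [Complex.normSq_apply, twistC_re, twistC_im] at hb
    field_simp at hb
    linear_combination hb
  have hre : x.re ^ 2 - y.re ^ 2 ≠ 0 := sub_ne_zero.2 (sq_re_ne_of_Fgood_nonpos hF hW)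
  have h4 : α ^ 4 = α' ^ 4 :=
    mul_right_cancel₀ hre ((balance α hα h).trans (balance α' hα' h').symm)
  exact (pow_left_inj₀ hα.le hα'.le (by norm_num)).1 h4

namespace IsZBasisOf

variable {S : Set ℂ} {x y : ℂ}

lemma mem_right (hb : IsZBasisOf S x y) : y ∈ S := by
  rw [hb]
  exact ⟨0, 1, by simp⟩

lemma neg_right (hb : IsZBasisOf S x y) : IsZBasisOf S x (-y) := by
  rw [IsZBasisOf, hb]
  ext z
  constructor <;> rintro ⟨m, n, rfl⟩ <;> exact ⟨m, -n, by push_cast; ring⟩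

lemma exists_eq_add_or_neg_eq_add {y' : ℂ} (hb : IsZBasisOf S x y) (hb' : IsZBasisOf S x y')
    (hV : (x * conj y').im ≠ 0) : ∃ k : ℤ, y' = y + k * x ∨ -y' = y + k * x := by
  obtain ⟨p, q, hy'⟩ : y' ∈ {z | ∃ m n : ℤ, z = m * x + n * y} := hb ▸ hb'.mem_right
  obtain ⟨r, s, hy⟩ : y ∈ {z | ∃ m n : ℤ, z = m * x + n * y'} := hb' ▸ hb.mem_right
  by_cases hqs : q * s = 1
  · rcases Int.eq_one_or_neg_one_of_mul_eq_one hqs with rfl | rfl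
    · exact ⟨p, Or.inl (by rw [hy']; push_cast; ring)⟩
    · exact ⟨-p, Or.inr (by rw [hy']; push_cast; ring)⟩
  · exfalso
    have hcoll : ((1 - q * s : ℤ) : ℂ) * y' = ((p + q * r : ℤ) : ℂ) * x := by
      push_cast
      linear_combination hy' + (q : ℂ) * hy
    have hcoll_im := congrArg (fun z => (x * conj z).im) hcoll
    simp only [map_mul, map_intCast, Complex.mul_im, Complex.mul_re, Complex.conj_re,
      Complex.conj_im, Complex.intCast_re, Complex.intCast_im] at hcoll_im
    have hne : ((1 - q * s : ℤ) : ℝ) ≠ 0 := by exact_mod_cast sub_ne_zero.2 (Ne.symm hqs)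
    apply hV
    simp only [Complex.mul_im, Complex.conj_re, Complex.conj_im]
    apply mul_left_cancel₀ hne
    linear_combination hcoll_im

lemma image_eq_latticeOf {f : ℂ → E2} (hb : IsZBasisOf S x y)
    (hf : ∀ m n : ℤ, f (m * x + n * y) = m • f x + n • f y) :
    f '' S = latticeOf (f x) (f y) := by
  rw [hb]
  ext w
  constructor
  · rintro ⟨z, ⟨m, n, rfl⟩, rfl⟩
    exact ⟨m, n, hf m n⟩
  · rintro ⟨m, n, rfl⟩
    exact ⟨m * x + n * y, ⟨m, n, rfl⟩, hf m n⟩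

end IsZBasisOf

lemma isLattice_latticeOf {u v : E2} (h : u 0 * v 1 - u 1 * v 0 ≠ 0) :
    IsLattice (latticeOf u v) := by
  refine ⟨u, v, LinearIndependent.pair_iff.2 fun s t hst => ?_, rfl⟩
  have h0 : s * u 0 + t * v 0 = 0 := by simpa using congrArg (· 0) hst
  have h1 : s * u 1 + t * v 1 = 0 := by simpa using congrArg (· 1) hst
  constructor
  · exact (mul_eq_zero.1 (by linear_combination v 1 * h0 - v 0 * h1 :
      s * (u 0 * v 1 - u 1 * v 0) = 0)).resolve_right h
  · exact (mul_eq_zero.1 (by linear_combination u 0 * h1 - u 1 * h0 :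
      t * (u 0 * v 1 - u 1 * v 0) = 0)).resolve_right h

lemma Tmap_iotaC_intCast_mul_add (α : ℝ) (x y : ℂ) (m n : ℤ) :
    Tmap α (iotaC (m * x + n * y)) = m • Tmap α (iotaC x) + n • Tmap α (iotaC y) := by
  ext i
  fin_cases i <;> simp [Tmap, iotaC, v2] <;> ring

lemma isLattice_image_Tmap_iotaC {S : Set ℂ} {x y : ℂ} {α : ℝ} (hα : α ≠ 0)
    (hb : IsZBasisOf S x y) (hV : (x * conj y).im ≠ 0) :
    IsLattice (Tmap α '' (iotaC '' S)) := by
  rw [Set.image_image, hb.image_eq_latticeOf (Tmap_iotaC_intCast_mul_add α x y)]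
  apply isLattice_latticeOf
  convert hV using 1
  simp only [Tmap, iotaC, v2, Matrix.cons_val_zero, Matrix.cons_val_one, Complex.mul_im,
    Complex.conj_re, Complex.conj_im]
  field_simp
  ring

lemma pos_mul_or_pos_mul_or_pos_mul {a b c : ℝ} (ha : a ≠ 0) (hb : b ≠ 0) (hc : c ≠ 0) :
    0 < a * b ∨ 0 < a * c ∨ 0 < b * c := by
  by_contra! h
  obtain ⟨hab, hac, hbc⟩ := h
  have hprod : 0 < (a * b) * (a * c) * (b * c) := by
    rw [show (a * b) * (a * c) * (b * c) = (a * b * c) ^ 2 by ring]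
    positivity
  nlinarith [mul_nonneg_of_nonpos_of_nonpos hab hac]

structure IsGoodTwist (S : Set ℂ) (x y : ℂ) (α : ℝ) : Prop where
  isZBasisOf : IsZBasisOf S x y
  im_mul_ne_zero : (x * y).im ≠ 0
  Fgood_nonpos : Fgood x y ≤ 0
  pos : 0 < α
  norm_eq : ‖Tmap α (iotaC x)‖ = ‖Tmap α (iotaC y)‖

namespace IsGoodTwist

variable {S : Set ℂ} {x y y' : ℂ} {α α' : ℝ}

lemma norm_twistC_eq (h : IsGoodTwist S x y α) : ‖twistC α x‖ = ‖twistC α y‖ := by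
  simpa only [Tmap_iotaC, norm_iotaC] using h.norm_eq

lemma im_mul_conj_ne_zero (h : IsGoodTwist S x y α) : (x * conj y).im ≠ 0 :=
  im_mul_conj_ne_zero_of_Fgood_nonpos h.Fgood_nonpos h.im_mul_ne_zero

lemma neg (h : IsGoodTwist S x y α) : IsGoodTwist S x (-y) α where
  isZBasisOf := h.isZBasisOf.neg_right
  im_mul_ne_zero := by rw [mul_neg, Complex.neg_im, neg_ne_zero]; exact h.im_mul_ne_zero
  Fgood_nonpos := by rw [Fgood_neg_right]; exact h.Fgood_nonpos
  pos := h.pos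
  norm_eq := by simpa only [Tmap_iotaC, norm_iotaC, twistC_neg, norm_neg] using h.norm_eq

lemma eq_of_add_intCast_mul {k : ℤ} (h : IsGoodTwist S x y α)
    (h' : IsGoodTwist S x (y + k * x) α') (hWW' : 0 < (x * y).im * (x * (y + k * x)).im) :
    α = α' := by
  have hα : α ≠ 0 := h.pos.ne'
  have he : (k : ℝ) * ((x ^ 2).im + (y ^ 2).im + k * (x * y).im) = 0 := by
    rcases eq_or_ne k 0 with rfl | hk
    · simp
    · rw [im_sq_add_im_sq_add_mul_eq_zero hk h.Fgood_nonpos h'.Fgood_nonpos hWW', mul_zero]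
  have hbal : ‖twistC α x‖ = ‖twistC α (y + k * x)‖ := by
    rw [twistC_add_intCast_mul, ← Complex.ofReal_intCast, h.norm_twistC_eq]
    refine (norm_add_mul_eq_norm h.norm_twistC_eq ?_ ?_).symm
    · rw [im_twistC_mul_twistC hα]
      exact h.im_mul_ne_zero
    · rwa [sq, sq, im_twistC_mul_twistC hα, im_twistC_mul_twistC hα, im_twistC_mul_twistC hα,
        ← sq, ← sq]
  exact eq_of_norm_twistC_eq h'.Fgood_nonpos h'.im_mul_ne_zero h.pos h'.pos hbal
    h'.norm_twistC_eq

lemma eq_of_pos_mul (h : IsGoodTwist S x y α) (h' : IsGoodTwist S x y' α')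
    (hs : 0 < ((x * y).im * (x * conj y).im) * ((x * y').im * (x * conj y').im)) : α = α' := by
  obtain ⟨k, hk | hk⟩ :=
    h.isZBasisOf.exists_eq_add_or_neg_eq_add h'.isZBasisOf h'.im_mul_conj_ne_zero
  · subst hk
    refine h.eq_of_add_intCast_mul h' (pos_of_mul_pos_left ?_ (sq_nonneg (x * conj y).im))
    rw [im_mul_conj_add_intCast_mul] at hs
    linear_combination hs
  · have h'' : IsGoodTwist S x (y + k * x) α' := hk ▸ h'.neg
    refine h.eq_of_add_intCast_mul h'' (pos_of_mul_pos_left ?_ (sq_nonneg (x * conj y).im))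
    have hW' : (x * y').im = -(x * (y + k * x)).im := by
      rw [← hk, mul_neg, Complex.neg_im, neg_neg]
    have hV' : (x * conj y').im = -(x * conj y).im := by
      rw [← neg_neg y', hk, map_neg, mul_neg, Complex.neg_im, im_mul_conj_add_intCast_mul]
    rw [hW', hV'] at hs
    linear_combination hs

lemma eq_or_eq_or_eq {y₁ y₂ y₃ : ℂ} {α₁ α₂ α₃ : ℝ} (h₁ : IsGoodTwist S x y₁ α₁)
    (h₂ : IsGoodTwist S x y₂ α₂) (h₃ : IsGoodTwist S x y₃ α₃) :
    α₁ = α₂ ∨ α₁ = α₃ ∨ α₂ = α₃ := by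
  rcases pos_mul_or_pos_mul_or_pos_mul (mul_ne_zero h₁.im_mul_ne_zero h₁.im_mul_conj_ne_zero)
    (mul_ne_zero h₂.im_mul_ne_zero h₂.im_mul_conj_ne_zero)
    (mul_ne_zero h₃.im_mul_ne_zero h₃.im_mul_conj_ne_zero) with hs | hs | hs
  · exact Or.inl (h₁.eq_of_pos_mul h₂ hs)
  · exact Or.inr (Or.inl (h₁.eq_of_pos_mul h₃ hs))
  · exact Or.inr (Or.inr (h₂.eq_of_pos_mul h₃ hs))

lemma isLattice (h : IsGoodTwist S x y α) : IsLattice (Tmap α '' (iotaC '' S)) :=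
  isLattice_image_Tmap_iotaC h.pos.ne' h.isZBasisOf h.im_mul_conj_ne_zero

end IsGoodTwist

lemma SimilarLat.refl (Λ : Set E2) : SimilarLat Λ Λ :=
  ⟨1, one_pos, LinearIsometryEquiv.refl ℝ E2, by simp⟩

lemma exists_pair_covering {β γ : Type*} {p : β → Prop} {P : γ → Prop} (f : β → γ)
    (hP : ∃ c, P c) (hf : ∀ b, p b → P (f b))
    (h3 : ∀ a b c, p a → p b → p c → a = b ∨ a = c ∨ b = c) :
    ∃ c₁ c₂, P c₁ ∧ P c₂ ∧ ∀ b, p b → f b = c₁ ∨ f b = c₂ := by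
  by_cases h1 : ∃ a, p a
  · obtain ⟨a, ha⟩ := h1
    by_cases h2 : ∃ b, p b ∧ b ≠ a
    · obtain ⟨b, hb, hba⟩ := h2
      refine ⟨f a, f b, hf a ha, hf b hb, fun c hc => ?_⟩
      rcases h3 a b c ha hb hc with h | h | h
      · exact absurd h.symm hba
      · exact Or.inl (h ▸ rfl)
      · exact Or.inr (h ▸ rfl)
    · push Not at h2
      exact ⟨f a, f a, hf a ha, hf a ha, fun c hc => Or.inl (by rw [h2 c hc])⟩
  · obtain ⟨c, hc⟩ := hP
    exact ⟨c, c, hc, hc, fun b hb => absurd ⟨b, hb⟩ h1⟩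

theorem stmt_15_general (D : ℕ) (I : Ideal (OK D)) (x : ℂ) :
    ∃ L₁ L₂ : Set E2, IsLattice L₁ ∧ IsLattice L₂ ∧
      ∀ y : ℂ, IsZBasisOf (idealSet D I) x y → (x * y).im ≠ 0 → Fgood x y ≤ 0 →
        ∀ α : ℝ, 0 < α → ‖Tmap α (iotaC x)‖ = ‖Tmap α (iotaC y)‖ →
          SimilarLat (Tmap α '' LamK D I) L₁ ∨ SimilarLat (Tmap α '' LamK D I) L₂ := by
  obtain ⟨L₁, L₂, hL₁, hL₂, hcover⟩ := exists_pair_covering (P := IsLattice)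
    (p := fun α => ∃ y, IsGoodTwist (idealSet D I) x y α) (fun α => Tmap α '' LamK D I)
    ⟨_, isLattice_latticeOf (u := v2 1 0) (v := v2 0 1) (by simp [v2])⟩
    (fun _ ⟨_, h⟩ => h.isLattice)
    (fun _ _ _ ⟨_, h₁⟩ ⟨_, h₂⟩ ⟨_, h₃⟩ => h₁.eq_or_eq_or_eq h₂ h₃)
  refine ⟨L₁, L₂, hL₁, hL₂, fun y hb hW hF α hα hnorm => ?_⟩
  rcases hcover α ⟨y, hb, hW, hF, hα, hnorm⟩ with h | h <;> rw [h]
  · exact Or.inl (SimilarLat.refl _)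
  · exact Or.inr (SimilarLat.refl _)

/-- An element `x ∈ I` with `Im(x²)² ≤ vol²(Λ_K(I))` extends to at most two good bases of `I`,
up to similarity of the resulting well-rounded twists. -/
theorem stmt_15 (D : ℕ) (hD : Squarefree D) (hD0 : 0 < D)
    (I : Ideal (OK D)) (hI : I ≠ ⊥)
    (x : ℂ) (hx : x ∈ idealSet D I)
    (hvol : ∀ u v : ℂ, IsZBasisOf (idealSet D I) u v →
      ((x ^ 2).im) ^ 2 ≤ ((u * (starRingEnd ℂ) v).im) ^ 2) :
    ∃ L₁ L₂ : Set E2, IsLattice L₁ ∧ IsLattice L₂ ∧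
      ∀ y : ℂ, IsZBasisOf (idealSet D I) x y → (x * y).im ≠ 0 → Fgood x y ≤ 0 →
        ∀ α : ℝ, 0 < α → ‖Tmap α (iotaC x)‖ = ‖Tmap α (iotaC y)‖ →
          SimilarLat (Tmap α '' LamK D I) L₁ ∨ SimilarLat (Tmap α '' LamK D I) L₂ :=
  stmt_15_general D I x
end
end

section
/- Let D be a squarefree positive integer with −D ≢ 1 (mod 4), and let Λ = ℤ·(1, 0) + ℤ·(0, √D) ⊆ ℝ² (the planar lattice Λ_K(𝒪_K) attached to the ring of integers of K = ℚ(√−D)). Then (a) there exists a real number α > 0 such that T_αΛ is well-rounded, and (b) for every α > 0 such that T_αΛ is well-rounded, the lattice T_αΛ is similar to the square (orthogonal) lattice ℤ² = ℤ·(1, 0) + ℤ·(0, 1). In particular, Λ has a unique well-rounded twist up to similarity, and it is an orthogonal lattice. -/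
/-!
`T_α` maps the rectangular lattice with sides `1, √D` to the rectangular lattice with sides
`α, √D / α`. A rectangular lattice with sides `a, b` has minimum `min a b`, and when `a ≠ b` all
its minimal vectors lie on one coordinate axis. Hence `T_αΛ` is well-rounded exactly when
`α = √D / α`, and then it is a scaled copy of `ℤ²`.
-/

open scoped RealInnerProductSpace

noncomputable section

lemma v2_apply_zero (s t : ℝ) : v2 s t 0 = s := rfl

lemma v2_apply_one (s t : ℝ) : v2 s t 1 = t := rfl

lemma E2_ext {z w : E2} (h0 : z 0 = w 0) (h1 : z 1 = w 1) : z = w := by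
  ext i; fin_cases i <;> assumption

lemma smul_v2 (c s t : ℝ) : c • v2 s t = v2 (c * s) (c * t) :=
  E2_ext rfl rfl

lemma v2_ne_zero_of_left_ne_zero {s : ℝ} (hs : s ≠ 0) (t : ℝ) : v2 s t ≠ 0 :=
  fun h => hs (congrArg (· 0) h)

lemma v2_ne_zero_of_right_ne_zero (s : ℝ) {t : ℝ} (ht : t ≠ 0) : v2 s t ≠ 0 :=
  fun h => ht (congrArg (· 1) h)

lemma norm_v2_left {a : ℝ} (ha : 0 ≤ a) : ‖v2 a 0‖ = a := by
  rw [EuclideanSpace.norm_eq, Fin.sum_univ_two]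
  simp [v2_apply_zero, v2_apply_one, Real.sqrt_sq ha]

lemma norm_v2_right {b : ℝ} (hb : 0 ≤ b) : ‖v2 0 b‖ = b := by
  rw [EuclideanSpace.norm_eq, Fin.sum_univ_two]
  simp [v2_apply_zero, v2_apply_one, Real.sqrt_sq hb]

lemma Tmap_v2 (α s t : ℝ) : Tmap α (v2 s t) = v2 (α * s) (t / α) := rfl

lemma Tmap_add (α : ℝ) (z w : E2) : Tmap α (z + w) = Tmap α z + Tmap α w :=
  E2_ext (by simp [Tmap, v2_apply_zero, mul_add]) (by simp [Tmap, v2_apply_one, add_div])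

lemma image_latticeOf (f : E2 →+ E2) (x y : E2) :
    f '' latticeOf x y = latticeOf (f x) (f y) := by
  ext z
  constructor
  · rintro ⟨w, ⟨m, n, rfl⟩, rfl⟩
    exact ⟨m, n, by simp only [map_add, map_zsmul]⟩
  · rintro ⟨m, n, rfl⟩
    exact ⟨m • x + n • y, ⟨m, n, rfl⟩, by simp only [map_add, map_zsmul]⟩

lemma Tmap_image_rect {α : ℝ} (a b : ℝ) :
    Tmap α '' latticeOf (v2 a 0) (v2 0 b) = latticeOf (v2 (α * a) 0) (v2 0 (b / α)) := by
  have := image_latticeOf (AddMonoidHom.mk' (Tmap α) (Tmap_add α)) (v2 a 0) (v2 0 b)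
  simpa only [AddMonoidHom.mk'_apply, Tmap_v2, mul_zero, zero_div] using this

lemma not_isWellRounded_of_minVecs_apply_eq_zero {Λ : Set E2} (i : Fin 2)
    (h : ∀ z ∈ minVecs Λ, z i = 0) : ¬ IsWellRounded Λ := by
  intro hWR
  let f : E2 →ₗ[ℝ] ℝ := (EuclideanSpace.proj i : E2 →L[ℝ] ℝ)
  have hspan : Submodule.span ℝ (minVecs Λ) ≤ LinearMap.ker f :=
    Submodule.span_le.mpr fun z hz => h z hz
  rw [hWR] at hspan
  have : f (EuclideanSpace.single i 1) = 0 := hspan Submodule.mem_top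
  simp [f] at this

section Rectangular

variable {a b : ℝ} {z : E2}

lemma mem_latticeOf_rect :
    z ∈ latticeOf (v2 a 0) (v2 0 b) ↔ ∃ m n : ℤ, z 0 = m * a ∧ z 1 = n * b := by
  constructor
  · rintro ⟨m, n, rfl⟩
    exact ⟨m, n, by simp [v2_apply_zero], by simp [v2_apply_one]⟩
  · rintro ⟨m, n, h0, h1⟩
    exact ⟨m, n, E2_ext (by simp [h0, v2_apply_zero]) (by simp [h1, v2_apply_one])⟩

lemma v2_left_mem_latticeOf_rect : v2 a 0 ∈ latticeOf (v2 a 0) (v2 0 b) :=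
  ⟨1, 0, by simp⟩

lemma v2_right_mem_latticeOf_rect : v2 0 b ∈ latticeOf (v2 a 0) (v2 0 b) :=
  ⟨0, 1, by simp⟩

lemma abs_le_abs_intCast_mul {m : ℤ} (hm : m ≠ 0) (c : ℝ) : |c| ≤ |m * c| := by
  rw [abs_mul]
  exact le_mul_of_one_le_left (abs_nonneg c) (by exact_mod_cast Int.one_le_abs hm)

lemma abs_le_norm_of_mem_rect_of_apply_zero_ne_zero
    (hz : z ∈ latticeOf (v2 a 0) (v2 0 b)) (h : z 0 ≠ 0) : |a| ≤ ‖z‖ := by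
  obtain ⟨m, n, h0, -⟩ := mem_latticeOf_rect.mp hz
  have hm : m ≠ 0 := by rintro rfl; simp [h0] at h
  calc |a| ≤ |m * a| := abs_le_abs_intCast_mul hm a
    _ = ‖z 0‖ := by rw [h0, Real.norm_eq_abs]
    _ ≤ ‖z‖ := PiLp.norm_apply_le z 0

lemma abs_le_norm_of_mem_rect_of_apply_one_ne_zero
    (hz : z ∈ latticeOf (v2 a 0) (v2 0 b)) (h : z 1 ≠ 0) : |b| ≤ ‖z‖ := by
  obtain ⟨m, n, -, h1⟩ := mem_latticeOf_rect.mp hz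
  have hn : n ≠ 0 := by rintro rfl; simp [h1] at h
  calc |b| ≤ |n * b| := abs_le_abs_intCast_mul hn b
    _ = ‖z 1‖ := by rw [h1, Real.norm_eq_abs]
    _ ≤ ‖z‖ := PiLp.norm_apply_le z 1

lemma lambda1_rect (ha : 0 < a) (hb : 0 < b) :
    lambda1 (latticeOf (v2 a 0) (v2 0 b)) = min a b := by
  refine IsLeast.csInf_eq ⟨?_, ?_⟩
  · rcases min_choice a b with h | h <;> rw [h]
    · exact ⟨_, v2_left_mem_latticeOf_rect, v2_ne_zero_of_left_ne_zero ha.ne' 0,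
        norm_v2_left ha.le⟩
    · exact ⟨_, v2_right_mem_latticeOf_rect, v2_ne_zero_of_right_ne_zero 0 hb.ne',
        norm_v2_right hb.le⟩
  · rintro r ⟨z, hz, hz0, rfl⟩
    by_cases h0 : z 0 = 0
    · have h1 : z 1 ≠ 0 := fun h1 => hz0 (E2_ext h0 h1)
      have := abs_le_norm_of_mem_rect_of_apply_one_ne_zero hz h1
      rw [abs_of_pos hb] at this
      exact (min_le_right a b).trans this
    · have := abs_le_norm_of_mem_rect_of_apply_zero_ne_zero hz h0
      rw [abs_of_pos ha] at this
      exact (min_le_left a b).trans this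

lemma not_isWellRounded_rect_of_lt (ha : 0 < a) (hb : 0 < b) (hab : a < b) :
    ¬ IsWellRounded (latticeOf (v2 a 0) (v2 0 b)) := by
  refine not_isWellRounded_of_minVecs_apply_eq_zero 1 fun z ⟨hz, hnorm⟩ => ?_
  by_contra h1
  have := abs_le_norm_of_mem_rect_of_apply_one_ne_zero hz h1
  rw [hnorm, lambda1_rect ha hb, abs_of_pos hb, min_eq_left hab.le] at this
  exact hab.not_ge this

lemma not_isWellRounded_rect_of_gt (ha : 0 < a) (hb : 0 < b) (hab : b < a) :
    ¬ IsWellRounded (latticeOf (v2 a 0) (v2 0 b)) := by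
  refine not_isWellRounded_of_minVecs_apply_eq_zero 0 fun z ⟨hz, hnorm⟩ => ?_
  by_contra h0
  have := abs_le_norm_of_mem_rect_of_apply_zero_ne_zero hz h0
  rw [hnorm, lambda1_rect ha hb, abs_of_pos ha, min_eq_right hab.le] at this
  exact hab.not_ge this

lemma isWellRounded_square (ha : 0 < a) : IsWellRounded (latticeOf (v2 a 0) (v2 0 a)) := by
  have hl1 : lambda1 (latticeOf (v2 a 0) (v2 0 a)) = a := by rw [lambda1_rect ha ha, min_self]
  have hx : v2 a 0 ∈ minVecs (latticeOf (v2 a 0) (v2 0 a)) :=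
    ⟨v2_left_mem_latticeOf_rect, by rw [norm_v2_left ha.le, hl1]⟩
  have hy : v2 0 a ∈ minVecs (latticeOf (v2 a 0) (v2 0 a)) :=
    ⟨v2_right_mem_latticeOf_rect, by rw [norm_v2_right ha.le, hl1]⟩
  refine eq_top_iff.mpr fun z _ => ?_
  have hz : z = (z 0 / a) • v2 a 0 + (z 1 / a) • v2 0 a := by
    refine E2_ext ?_ ?_ <;> simp [v2_apply_zero, v2_apply_one, ha.ne']
  rw [hz]
  exact add_mem (Submodule.smul_mem _ _ (Submodule.subset_span hx))
    (Submodule.smul_mem _ _ (Submodule.subset_span hy))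

lemma isWellRounded_rect_iff (ha : 0 < a) (hb : 0 < b) :
    IsWellRounded (latticeOf (v2 a 0) (v2 0 b)) ↔ a = b := by
  refine ⟨fun hWR => ?_, fun hab => hab ▸ isWellRounded_square ha⟩
  rcases lt_trichotomy a b with hab | hab | hab
  · exact absurd hWR (not_isWellRounded_rect_of_lt ha hb hab)
  · exact hab
  · exact absurd hWR (not_isWellRounded_rect_of_gt ha hb hab)

lemma latticeSimilar_square (ha : 0 < a) :
    LatticeSimilar (latticeOf (v2 a 0) (v2 0 a)) (latticeOf (v2 1 0) (v2 0 1)) := by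
  refine ⟨a⁻¹, inv_pos.mpr ha, LinearIsometryEquiv.refl ℝ E2, ?_⟩
  have := image_latticeOf (DistribSMul.toAddMonoidHom E2 a⁻¹) (v2 a 0) (v2 0 a)
  simp only [DistribSMul.toAddMonoidHom_apply, smul_v2, inv_mul_cancel₀ ha.ne',
    mul_zero] at this
  simpa using this.symm

end Rectangular

theorem stmt_16_general (D : ℕ) (hD0 : 0 < D) :
    (∃ α : ℝ, 0 < α ∧
        IsWellRounded (Tmap α '' latticeOf (v2 1 0) (v2 0 (Real.sqrt D)))) ∧
      ∀ α : ℝ, 0 < α →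
        IsWellRounded (Tmap α '' latticeOf (v2 1 0) (v2 0 (Real.sqrt D))) →
        LatticeSimilar (Tmap α '' latticeOf (v2 1 0) (v2 0 (Real.sqrt D)))
          (latticeOf (v2 1 0) (v2 0 1)) := by
  have hb : 0 < Real.sqrt D := Real.sqrt_pos.mpr (by exact_mod_cast hD0)
  simp only [Tmap_image_rect, mul_one]
  refine ⟨⟨Real.sqrt (Real.sqrt D), Real.sqrt_pos.mpr hb, ?_⟩, fun α hα hWR => ?_⟩
  · rw [Real.div_sqrt]
    exact isWellRounded_square (Real.sqrt_pos.mpr hb)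
  · rw [isWellRounded_rect_iff hα (div_pos hb hα)] at hWR
    rw [← hWR]
    exact latticeSimilar_square hα

/-- For squarefree `D > 0` with `-D ≢ 1 (mod 4)`, the lattice `ℤ(1,0) + ℤ(0,√D)` has a
well-rounded twist, and every well-rounded twist of it is similar to the square lattice `ℤ²`. -/
theorem stmt_16 (D : ℕ) (hD : Squarefree D) (hD0 : 0 < D) (hmod : D % 4 ≠ 3) :
    (∃ α : ℝ, 0 < α ∧
        IsWellRounded (Tmap α '' latticeOf (v2 1 0) (v2 0 (Real.sqrt D)))) ∧
      ∀ α : ℝ, 0 < α →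
        IsWellRounded (Tmap α '' latticeOf (v2 1 0) (v2 0 (Real.sqrt D))) →
        LatticeSimilar (Tmap α '' latticeOf (v2 1 0) (v2 0 (Real.sqrt D)))
          (latticeOf (v2 1 0) (v2 0 1)) :=
  stmt_16_general D hD0
end
end

section
/- Let D be a squarefree positive integer, K = ℚ(√−D) ⊂ ℂ (with √−D = i√D), and 𝒪_K its ring of integers. Then for every nonzero ideal I of 𝒪_K there exists a real number α > 0 such that the twist T_αΛ_K(I) is a well-rounded lattice; that is, every ideal of 𝒪_K has at least one well-rounded twist. -/
open scoped RealInnerProductSpace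

noncomputable section

/-! A nonzero ideal `I` is an additive subgroup of `ℤ + ℤδ` containing the real number
`N(z) = z z̄` for any nonzero `z ∈ I`, so `I ∩ ℝ = sℤ` with `s > 0`, and `I` has a `ℤ`-basis
`s, v` with `Im v ≠ 0`; reducing `v` modulo `s` gives `|Re v| ≤ s / 2`. Twisting by `α` with
`α⁴ = (Im v)² / (s² - (Re v)²)` makes the images of `s` and `v` equally long, while their inner
product `α² s Re v` stays at most half their squared length. Such a basis is Gauss-reduced:
`‖jx + ky‖² ≥ (j² + k² - |jk|) ‖x‖² ≥ ‖x‖²`, so both vectors are minimal and span the plane. -/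

section ReducedBasis

variable {V : Type*} [NormedAddCommGroup V] [InnerProductSpace ℝ V] {x y : V}

lemma mul_sq_norm_le_sq_norm_smul_add_smul (hxy : ‖x‖ = ‖y‖) (hinner : |⟪x, y⟫| ≤ ‖x‖ ^ 2 / 2)
    (a b : ℝ) : (a ^ 2 + b ^ 2 - |a * b|) * ‖x‖ ^ 2 ≤ ‖a • x + b • y‖ ^ 2 := by
  have hcross : -(|a * b| * ‖x‖ ^ 2) ≤ 2 * (a * b) * ⟪x, y⟫ := by
    have := neg_abs_le (a * b * ⟪x, y⟫)
    rw [abs_mul] at this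
    nlinarith [abs_nonneg (a * b)]
  rw [norm_add_sq_real, norm_smul, norm_smul, real_inner_smul_left, real_inner_smul_right,
    mul_pow, mul_pow, Real.norm_eq_abs, Real.norm_eq_abs, sq_abs, sq_abs, ← hxy]
  nlinarith

lemma one_le_sq_add_sq_sub_abs_mul {j k : ℤ} (h : j ≠ 0 ∨ k ≠ 0) : 1 ≤ j ^ 2 + k ^ 2 - |j * k| := by
  rw [abs_mul, ← sq_abs j, ← sq_abs k]
  rcases h with h | h
  · nlinarith [abs_pos.mpr h, sq_nonneg (2 * |k| - |j|)]
  · nlinarith [abs_pos.mpr h, sq_nonneg (2 * |j| - |k|)]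

lemma linearIndependent_pair_of_reduced (hx : x ≠ 0) (hxy : ‖x‖ = ‖y‖)
    (hinner : |⟪x, y⟫| ≤ ‖x‖ ^ 2 / 2) : LinearIndependent ℝ ![x, y] := by
  refine LinearIndependent.pair_iff.mpr fun a b hab => ?_
  have hle := mul_sq_norm_le_sq_norm_smul_add_smul hxy hinner a b
  rw [hab, norm_zero] at hle
  have hcoeff : a ^ 2 + b ^ 2 - |a * b| ≤ 0 :=
    nonpos_of_mul_nonpos_left (by simpa using hle) (by positivity)
  rw [abs_mul] at hcoeff
  constructor <;> nlinarith [sq_abs a, sq_abs b, sq_nonneg (|a| - |b|), abs_nonneg a, abs_nonneg b]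

lemma norm_le_norm_zsmul_add_zsmul (hxy : ‖x‖ = ‖y‖) (hinner : |⟪x, y⟫| ≤ ‖x‖ ^ 2 / 2)
    {j k : ℤ} (hjk : j ≠ 0 ∨ k ≠ 0) : ‖x‖ ≤ ‖j • x + k • y‖ := by
  have hcoeff : (1 : ℝ) ≤ (j : ℝ) ^ 2 + (k : ℝ) ^ 2 - |(j : ℝ) * k| := by
    exact_mod_cast one_le_sq_add_sq_sub_abs_mul hjk
  have hle := mul_sq_norm_le_sq_norm_smul_add_smul hxy hinner j k
  rw [Int.cast_smul_eq_zsmul, Int.cast_smul_eq_zsmul] at hle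
  exact le_of_sq_le_sq (by nlinarith [sq_nonneg ‖x‖]) (norm_nonneg _)

end ReducedBasis

lemma lambda1_latticeOf {x y : E2} (hx : x ≠ 0) (hxy : ‖x‖ = ‖y‖)
    (hinner : |⟪x, y⟫| ≤ ‖x‖ ^ 2 / 2) : lambda1 (latticeOf x y) = ‖x‖ := by
  refine IsLeast.csInf_eq ⟨⟨x, ⟨1, 0, by simp⟩, hx, rfl⟩, ?_⟩
  rintro r ⟨z, ⟨j, k, rfl⟩, hz, rfl⟩
  refine norm_le_norm_zsmul_add_zsmul hxy hinner ?_
  by_contra! h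
  simp [h.1, h.2] at hz

lemma isWellRounded_latticeOf {x y : E2} (hx : x ≠ 0) (hxy : ‖x‖ = ‖y‖)
    (hinner : |⟪x, y⟫| ≤ ‖x‖ ^ 2 / 2) : IsWellRounded (latticeOf x y) := by
  have hspan : Submodule.span ℝ {x, y} = ⊤ := by
    rw [← Matrix.range_cons_cons_empty x y ![]]
    exact (linearIndependent_pair_of_reduced hx hxy hinner).span_eq_top_of_card_eq_finrank'
      (by simp)
  have hmin : ({x, y} : Set E2) ⊆ minVecs (latticeOf x y) := by
    rw [Set.insert_subset_iff, Set.singleton_subset_iff, minVecs, lambda1_latticeOf hx hxy hinner]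
    exact ⟨⟨⟨1, 0, by simp⟩, rfl⟩, ⟨⟨0, 1, by simp⟩, hxy.symm⟩⟩
  exact top_le_iff.mp (hspan ▸ Submodule.span_mono hmin)

lemma intCast_mul_notMem_Ioo {c : ℝ} (hc : 0 < c) (n : ℤ) : (n : ℝ) * c ∉ Set.Ioo 0 c := by
  rintro ⟨h0, h1⟩
  have hn0 : (0 : ℝ) < n := pos_of_mul_pos_left h0 hc.le
  have hn1 : (n : ℝ) < 1 := by nlinarith
  norm_cast at hn0 hn1
  omega

lemma AddSubgroup.exists_pos_eq_zmultiples {H : AddSubgroup ℝ} {x a : ℝ} (hxH : x ∈ H) (hx : x ≠ 0)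
    (ha : 0 < a) (hd : Disjoint (H : Set ℝ) (Set.Ioo 0 a)) :
    ∃ s, 0 < s ∧ H = AddSubgroup.zmultiples s := by
  have hH : H ≠ ⊥ := fun h => hx (by simpa [h] using hxH)
  obtain ⟨s, hs⟩ := AddSubgroup.exists_isLeast_pos hH ha hd
  exact ⟨s, hs.1.2, (AddSubgroup.cyclic_of_min hs).trans (AddSubgroup.zmultiples_eq_closure s).symm⟩

lemma AddSubgroup.exists_isZBasisOf (G : AddSubgroup ℂ) {a b : ℝ} (ha : 0 < a) (hb : 0 < b)
    (hre : Disjoint (G.comap Complex.ofRealHom.toAddMonoidHom : Set ℝ) (Set.Ioo 0 a))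
    (him : Disjoint (G.map Complex.imAddGroupHom : Set ℝ) (Set.Ioo 0 b))
    {r : ℝ} (hrG : (r : ℂ) ∈ G) (hr : r ≠ 0) {w₀ : ℂ} (hw₀G : w₀ ∈ G) (hw₀ : w₀.im ≠ 0) :
    ∃ s : ℝ, 0 < s ∧ ∃ v : ℂ, 0 < v.im ∧ IsZBasisOf G s v := by
  obtain ⟨s, hs, hGre⟩ := AddSubgroup.exists_pos_eq_zmultiples (H := G.comap _) hrG hr ha hre
  obtain ⟨t, ht, hGim⟩ :=
    AddSubgroup.exists_pos_eq_zmultiples (H := G.map _) ⟨w₀, hw₀G, rfl⟩ hw₀ hb him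
  have hsG : (s : ℂ) ∈ G :=
    (hGre ▸ AddSubgroup.mem_zmultiples s : s ∈ G.comap Complex.ofRealHom.toAddMonoidHom)
  obtain ⟨v, hvG, hvt⟩ : t ∈ G.map Complex.imAddGroupHom := hGim ▸ AddSubgroup.mem_zmultiples t
  replace hvt : v.im = t := hvt
  subst hvt
  refine ⟨s, hs, v, ht, Set.ext fun w => ⟨fun hw => ?_, ?_⟩⟩
  · obtain ⟨k, hk⟩ : ∃ k : ℤ, k • v.im = w.im := by
      rw [← AddSubgroup.mem_zmultiples_iff, ← hGim]
      exact ⟨w, hw, rfl⟩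
    have hreal : ((w - k * v).re : ℂ) = w - k * v :=
      Complex.ext (by simp) (by simp [← hk])
    obtain ⟨j, hj⟩ : ∃ j : ℤ, j • s = (w - k * v).re := by
      rw [← AddSubgroup.mem_zmultiples_iff, ← hGre]
      change ((w - k * v).re : ℂ) ∈ G
      rw [hreal]
      exact sub_mem hw (by simpa using zsmul_mem hvG k)
    have hj' : (j : ℂ) * s = ((w - k * v).re : ℂ) := by exact_mod_cast (zsmul_eq_mul s j ▸ hj)
    exact ⟨j, k, by linear_combination -hreal - hj'⟩
  · rintro ⟨m, n, rfl⟩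
    simpa using add_mem (zsmul_mem hsG m) (zsmul_mem hvG n)

lemma IsZBasisOf.sub_intCast_mul {S : Set ℂ} {u v : ℂ} (h : IsZBasisOf S u v) (k : ℤ) :
    IsZBasisOf S u (v - k * u) := by
  rw [IsZBasisOf, h]
  ext z
  constructor
  · rintro ⟨m, n, rfl⟩
    exact ⟨m + n * k, n, by push_cast; ring⟩
  · rintro ⟨m, n, rfl⟩
    exact ⟨m - n * k, n, by push_cast; ring⟩

lemma IsZBasisOf.exists_abs_re_le {S : Set ℂ} {s : ℝ} (hs : 0 < s) {v : ℂ}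
    (h : IsZBasisOf S s v) : ∃ v' : ℂ, v'.im = v.im ∧ |v'.re| ≤ s / 2 ∧ IsZBasisOf S s v' := by
  refine ⟨v - round (v.re / s) * s, by simp, ?_, h.sub_intCast_mul _⟩
  have hre : (v - round (v.re / s) * s).re = s * (v.re / s - round (v.re / s)) := by
    simp only [Complex.sub_re, Complex.mul_re, Complex.intCast_re, Complex.intCast_im,
      Complex.ofReal_re, Complex.ofReal_im]
    field_simp
    ring
  rw [hre, abs_mul, abs_of_pos hs]
  nlinarith [abs_sub_round (v.re / s)]

lemma IsZBasisOf.image_eq_latticeOf_s19 {S : Set ℂ} {u v : ℂ} (h : IsZBasisOf S u v) (f : ℂ →+ E2) :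
    f '' S = latticeOf (f u) (f v) := by
  rw [h]
  ext z
  simp only [latticeOf, Set.mem_image, Set.mem_ofPred_eq]
  constructor
  · rintro ⟨_, ⟨m, n, rfl⟩, rfl⟩
    exact ⟨m, n, by simp [← zsmul_eq_mul]⟩
  · rintro ⟨m, n, rfl⟩
    exact ⟨m * u + n * v, ⟨m, n, rfl⟩, by simp [← zsmul_eq_mul]⟩

lemma Subring.mem_closure_singleton_iff_of_sq_eq {R : Type*} [CommRing R] {δ : R} {c d : ℤ}
    (hδ : δ ^ 2 = c + d * δ) {z : R} : z ∈ Subring.closure {δ} ↔ ∃ m n : ℤ, z = m + n * δ := by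
  constructor
  · intro hz
    induction hz using Subring.closure_induction with
    | mem x hx => exact ⟨0, 1, by rw [Set.mem_singleton_iff.mp hx]; push_cast; ring⟩
    | zero => exact ⟨0, 0, by push_cast; ring⟩
    | one => exact ⟨1, 0, by push_cast; ring⟩
    | add x y _ _ hx hy =>
      obtain ⟨⟨m, n, rfl⟩, ⟨m', n', rfl⟩⟩ := And.intro hx hy
      exact ⟨m + m', n + n', by push_cast; ring⟩
    | neg x _ hx =>
      obtain ⟨m, n, rfl⟩ := hx
      exact ⟨-m, -n, by push_cast; ring⟩
    | mul x y _ _ hx hy =>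
      obtain ⟨⟨m, n, rfl⟩, ⟨m', n', rfl⟩⟩ := And.intro hx hy
      exact ⟨m * m' + n * n' * c, m * n' + n * m' + n * n' * d, by
        push_cast; linear_combination (n * n' : R) * hδ⟩
  · rintro ⟨m, n, rfl⟩
    exact add_mem (intCast_mem _ m) (mul_mem (intCast_mem _ n) (Subring.subset_closure rfl))

lemma sqrtnD_sq (D : ℕ) : sqrtnD D ^ 2 = -(D : ℂ) := by
  rw [sqrtnD, mul_pow, Complex.I_sq, ← Complex.ofReal_pow, Real.sq_sqrt (Nat.cast_nonneg D)]
  push_cast; ring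

lemma deltaK_sq (D : ℕ) : ∃ c d : ℤ, deltaK D ^ 2 = c + d * deltaK D := by
  unfold deltaK
  split_ifs
  · obtain ⟨c, hc⟩ : (4 : ℤ) ∣ D + 1 := by omega
    refine ⟨-c, 1, ?_⟩
    have hc' : (D : ℂ) + 1 = 4 * c := by exact_mod_cast hc
    push_cast
    linear_combination (sqrtnD_sq D - hc') / 4
  · exact ⟨-D, 0, by push_cast; linear_combination sqrtnD_sq D⟩

lemma conj_deltaK (D : ℕ) : ∃ t : ℤ, starRingEnd ℂ (deltaK D) = t - deltaK D := by
  have hconj : starRingEnd ℂ (sqrtnD D) = -sqrtnD D := by simp [sqrtnD]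
  unfold deltaK
  split_ifs
  · exact ⟨1, by rw [map_div₀, map_add, map_one, hconj, map_ofNat]; push_cast; ring⟩
  · exact ⟨0, by rw [hconj]; push_cast; ring⟩

lemma deltaK_im_pos {D : ℕ} (hD0 : 0 < D) : 0 < (deltaK D).im := by
  have him : (sqrtnD D).im = Real.sqrt D := by simp [sqrtnD]
  have hpos : 0 < Real.sqrt D := Real.sqrt_pos.mpr (by exact_mod_cast hD0)
  unfold deltaK
  split_ifs
  · simpa [Complex.div_ofNat_im, him] using hpos
  · rwa [him]

lemma mem_OK_iff {D : ℕ} {z : ℂ} : z ∈ OK D ↔ ∃ m n : ℤ, z = m + n * deltaK D :=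
  have ⟨_, _, hδ⟩ := deltaK_sq D
  Subring.mem_closure_singleton_iff_of_sq_eq hδ

lemma conj_mem_OK {D : ℕ} {z : ℂ} (hz : z ∈ OK D) : starRingEnd ℂ z ∈ OK D := by
  obtain ⟨m, n, rfl⟩ := mem_OK_iff.mp hz
  obtain ⟨t, ht⟩ := conj_deltaK D
  exact mem_OK_iff.mpr ⟨m + n * t, -n, by simp [ht]; ring⟩

def idealAddSubgroup (D : ℕ) (I : Ideal (OK D)) : AddSubgroup ℂ :=
  I.toAddSubgroup.map (OK D).subtype.toAddMonoidHom

lemma coe_idealAddSubgroup (D : ℕ) (I : Ideal (OK D)) :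
    (idealAddSubgroup D I : Set ℂ) = idealSet D I := rfl

lemma mul_mem_idealAddSubgroup {D : ℕ} {I : Ideal (OK D)} {a w : ℂ} (ha : a ∈ OK D)
    (hw : w ∈ idealAddSubgroup D I) : a * w ∈ idealAddSubgroup D I := by
  obtain ⟨z, hz, rfl⟩ := hw
  exact ⟨⟨a, ha⟩ * z, I.mul_mem_left _ hz, rfl⟩

lemma exists_int_im_eq_of_mem_OK {D : ℕ} {z : ℂ} (hz : z ∈ OK D) :
    ∃ n : ℤ, z.im = n * (deltaK D).im := by
  obtain ⟨m, n, rfl⟩ := mem_OK_iff.mp hz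
  exact ⟨n, by simp⟩

lemma exists_int_eq_of_mem_OK_of_im_eq_zero {D : ℕ} (hD0 : 0 < D) {z : ℂ} (hz : z ∈ OK D)
    (him : z.im = 0) : ∃ m : ℤ, z = m := by
  obtain ⟨m, n, rfl⟩ := mem_OK_iff.mp hz
  have hn : n = 0 := by
    simpa [(deltaK_im_pos hD0).ne'] using him
  exact ⟨m, by simp [hn]⟩

lemma exists_isZBasisOf_idealSet {D : ℕ} (hD0 : 0 < D) {I : Ideal (OK D)} (hI : I ≠ ⊥) :
    ∃ s : ℝ, 0 < s ∧ ∃ v : ℂ, 0 < v.im ∧ IsZBasisOf (idealSet D I) s v := by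
  have hδ := deltaK_im_pos hD0
  have hOK : ∀ w ∈ idealAddSubgroup D I, w ∈ OK D := by
    rintro _ ⟨z, -, rfl⟩
    exact z.2
  obtain ⟨z, hzI, hz⟩ := Submodule.exists_mem_ne_zero_of_ne_bot hI
  have hnormSq : (Complex.normSq z : ℂ) ∈ idealAddSubgroup D I := by
    rw [← Complex.mul_conj, mul_comm]
    exact mul_mem_idealAddSubgroup (conj_mem_OK z.2) ⟨z, hzI, rfl⟩
  have hnormSq_ne : Complex.normSq z ≠ 0 :=
    mt Complex.normSq_eq_zero.mp (by exact_mod_cast hz)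
  rw [← coe_idealAddSubgroup]
  refine (idealAddSubgroup D I).exists_isZBasisOf one_pos hδ ?_ ?_ hnormSq hnormSq_ne
    (mul_mem_idealAddSubgroup (Subring.subset_closure rfl) hnormSq)
    (by simpa [Complex.mul_im] using mul_ne_zero hδ.ne' hnormSq_ne)
  · refine Set.disjoint_left.mpr fun x hx => ?_
    obtain ⟨m, hm⟩ := exists_int_eq_of_mem_OK_of_im_eq_zero hD0 (hOK _ hx) (by simp)
    rw [Complex.ofReal_inj.mp (hm.trans (Complex.ofReal_intCast m).symm), ← mul_one (m : ℝ)]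
    exact intCast_mul_notMem_Ioo one_pos m
  · refine Set.disjoint_left.mpr ?_
    rintro _ ⟨w, hw, rfl⟩
    obtain ⟨n, hn⟩ := exists_int_im_eq_of_mem_OK (hOK w hw)
    change w.im ∉ _
    exact hn ▸ intCast_mul_notMem_Ioo hδ n

lemma v2_add (a b c d : ℝ) : v2 (a + c) (b + d) = v2 a b + v2 c d := by
  ext i; fin_cases i <;> rfl

lemma sq_norm_v2 (a b : ℝ) : ‖v2 a b‖ ^ 2 = a ^ 2 + b ^ 2 := by
  simp [v2, EuclideanSpace.norm_sq_eq, Fin.sum_univ_two]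

lemma inner_v2 (a b c d : ℝ) : ⟪v2 a b, v2 c d⟫ = a * c + b * d := by
  simp [v2, PiLp.inner_apply, Fin.sum_univ_two, mul_comm]

def twistHom (α : ℝ) : ℂ →+ E2 where
  toFun w := Tmap α (iotaC w)
  map_zero' := by ext i; fin_cases i <;> simp [Tmap, iotaC, v2]
  map_add' w z := by
    simp only [Tmap, iotaC, Complex.add_re, Complex.add_im, ← v2_add]
    congr 1 <;> simp [v2] <;> ring

lemma twistHom_apply (α : ℝ) (w : ℂ) : twistHom α w = v2 (α * w.re) (-w.im / α) := rfl

lemma exists_twist_reduced {s : ℝ} {v : ℂ} (hs : 0 < s) (hv : v.im ≠ 0) (hre : |v.re| ≤ s / 2) :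
    ∃ α > 0, twistHom α s ≠ 0 ∧ ‖twistHom α s‖ = ‖twistHom α v‖ ∧
      |⟪twistHom α s, twistHom α v⟫| ≤ ‖twistHom α s‖ ^ 2 / 2 := by
  have hgap : 0 < s ^ 2 - v.re ^ 2 := by nlinarith [sq_abs v.re, abs_nonneg v.re]
  set α := (v.im ^ 2 / (s ^ 2 - v.re ^ 2)) ^ ((4 : ℕ)⁻¹ : ℝ)
  have hα : 0 < α := by positivity
  have hα4 : α ^ 4 * (s ^ 2 - v.re ^ 2) = v.im ^ 2 := by
    rw [Real.rpow_inv_natCast_pow (by positivity) (by norm_num), div_mul_cancel₀ _ hgap.ne']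
  have hnorm_s : ‖twistHom α s‖ ^ 2 = α ^ 2 * s ^ 2 := by
    simp [twistHom_apply, sq_norm_v2]; ring
  have hnorm_v : ‖twistHom α v‖ ^ 2 = α ^ 2 * s ^ 2 := by
    rw [twistHom_apply, sq_norm_v2]
    field_simp
    linear_combination -hα4
  refine ⟨α, hα, ?_, ?_, ?_⟩
  · rw [← norm_ne_zero_iff, ← sq_pos_iff, hnorm_s]
    positivity
  · exact (sq_eq_sq₀ (norm_nonneg _) (norm_nonneg _)).mp (hnorm_s.trans hnorm_v.symm)
  · rw [hnorm_s, twistHom_apply, twistHom_apply, inner_v2]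
    simp only [Complex.ofReal_re, Complex.ofReal_im, neg_zero, zero_div, zero_mul, add_zero]
    rw [show α * s * (α * v.re) = α ^ 2 * s * v.re by ring, abs_mul, abs_of_pos (by positivity)]
    nlinarith [mul_pos (pow_pos hα 2) hs]

theorem stmt_19_general (D : ℕ) (hD0 : 0 < D)
    (I : Ideal (OK D)) (hI : I ≠ ⊥) :
    ∃ α : ℝ, 0 < α ∧ IsWellRounded (Tmap α '' LamK D I) := by
  obtain ⟨s, hs, v₀, hv₀, hbasis₀⟩ := exists_isZBasisOf_idealSet hD0 hI
  obtain ⟨v, hv, hre, hbasis⟩ := hbasis₀.exists_abs_re_le hs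
  obtain ⟨α, hα, hx, hxy, hinner⟩ := exists_twist_reduced hs (hv ▸ hv₀.ne') hre
  refine ⟨α, hα, ?_⟩
  have htwist : Tmap α '' LamK D I = twistHom α '' idealSet D I := Set.image_image _ _ _
  rw [htwist, hbasis.image_eq_latticeOf_s19]
  exact isWellRounded_latticeOf hx hxy hinner

/-- Every nonzero ideal of `𝒪_K` has at least one well-rounded twist. -/
theorem stmt_19 (D : ℕ) (hD : Squarefree D) (hD0 : 0 < D)
    (I : Ideal (OK D)) (hI : I ≠ ⊥) :
    ∃ α : ℝ, 0 < α ∧ IsWellRounded (Tmap α '' LamK D I) :=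
  stmt_19_general D hD0 I hI
end
end
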